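/- arXiv:2002.10442 — 6 statements merged into one kernel-verified Lean document; each statement's English description precedes it below -/
import Mathlib

section
/- Let M = Σ_{i=0}^k ξ_i·D^i (ξ_i ∈ R, ξ_k ≠ 0) be an x-symmetry driver for the equation u_{xy} = F. Then every coefficient ξ_i lies in 𝓕 (i.e. no ξ_i involves any variable ū_j, j ≥ 1), and the leading coefficient satisfies D̄(ξ_k) = (∂F/∂u_1)·ξ_k. -/
/-!
Since `D` and `D̄` commute, `D̄` kills every `Dⁱ W` when `D̄ W = 0`, so applying the linearized
operator `S` of `u_{xy} = F` to `∑ ξᵢ Dⁱ W` gives `∑_{i ≤ k+1} cᵢ Dⁱ W` with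
`c_{i+1} = S ξ_{i+1} + D̄ ξᵢ - F_{u₁} ξᵢ` (and `S ξ_{k+1}` read as `0`). The x-integrals
`W = xⁿ` force every `cᵢ` to vanish; `c_{k+1} = 0` is the claim on `ξ_k`. Going down from `k`,
`D̄ ξᵢ = F_{u₁} ξᵢ - S ξ_{i+1}` where the last term involves at most `ū₁`; since `D̄` maps `ū_m`
to `ū_{m+1}`, a highest `ū` occurring in `ξᵢ` would produce an uncancelled higher one, so
`ξᵢ ∈ 𝓕`.
-/

open MvPolynomial

noncomputable section

/-- Variables of the ring R = K[x, y, u₀, u₁, …, ū₁, ū₂, …].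
`Var.ubar j` denotes the variable ū_{j+1}, so that `Var.ubar 0 = ū₁`. -/
inductive Var : Type
  | x : Var
  | y : Var
  | u : ℕ → Var
  | ubar : ℕ → Var
  deriving DecidableEq

/-- The ring R. -/
abbrev RR (K : Type*) [CommSemiring K] : Type _ := MvPolynomial Var K

variable {K : Type*} [Field K] [CharZero K]

/-- The subring 𝓕 ⊆ R of polynomials not involving any ū_j. -/
def Fcal (K : Type*) [CommSemiring K] : Subalgebra K (RR K) :=
  MvPolynomial.supported K {v : Var | ∀ j : ℕ, v ≠ Var.ubar j}

/-- The set of variables that F may involve: x, y, u₀, u₁, ū₁. -/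
def Fvars : Set Var := {Var.x, Var.y, Var.u 0, Var.u 1, Var.ubar 0}

/-- `D` and `Dbar` are the total derivatives with respect to x and y on solutions
of u_{xy} = F, i.e. the K-derivations determined by mutual recursion by
D(x) = 1, D(y) = 0, D(uᵢ) = u_{i+1}, D(ū_i) = D̄^{i-1}(F) (i ≥ 1);
D̄(y) = 1, D̄(x) = 0, D̄(u₀) = ū₁, D̄(u_i) = D^{i-1}(F) (i ≥ 1), D̄(ū_i) = ū_{i+1}.
(Recall `Var.ubar j` denotes ū_{j+1}.)  -/
structure IsTotalDerPair (F : RR K) (D Dbar : Derivation K (RR K) (RR K)) : Prop where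
  hDx : D (X Var.x) = 1
  hDy : D (X Var.y) = 0
  hDu : ∀ i : ℕ, D (X (Var.u i)) = X (Var.u (i + 1))
  hDubar : ∀ j : ℕ, D (X (Var.ubar j)) = (⇑Dbar)^[j] F
  hDbary : Dbar (X Var.y) = 1
  hDbarx : Dbar (X Var.x) = 0
  hDbaru0 : Dbar (X (Var.u 0)) = X (Var.ubar 0)
  hDbaru : ∀ i : ℕ, Dbar (X (Var.u (i + 1))) = (⇑D)^[i] F
  hDbarubar : ∀ j : ℕ, Dbar (X (Var.ubar j)) = X (Var.ubar (j + 1))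

/-- `g` is a symmetry of the equation u_{xy} = F:
D(D̄(g)) − F_{u₁}·D(g) − F_{ū₁}·D̄(g) − F_{u₀}·g = 0. -/
def IsSymmetry (F : RR K) (D Dbar : Derivation K (RR K) (RR K)) (g : RR K) : Prop :=
  D (Dbar g) - pderiv (Var.u 1) F * D g - pderiv (Var.ubar 0) F * Dbar g
    - pderiv (Var.u 0) F * g = 0

/-- The differential operator Σ_{i=0}^k ξ_i·Df^i applied to `a`. -/
def opApply {A : Type*} [CommRing A] (Df : A → A) (ξ : ℕ → A) (k : ℕ) (a : A) : A :=
  ∑ i ∈ Finset.range (k + 1), ξ i * Df^[i] a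

/-- `ξ 0, …, ξ k` are the coefficients of an x-symmetry driver of order `k`:
`ξ k ≠ 0` and Σ ξ_i·D^i maps every x-integral to a symmetry. -/
def IsDriver (F : RR K) (D Dbar : Derivation K (RR K) (RR K)) (k : ℕ) (ξ : ℕ → RR K) : Prop :=
  ξ k ≠ 0 ∧ ∀ W : RR K, Dbar W = 0 → IsSymmetry F D Dbar (opApply ⇑D ξ k W)

/-- The Fréchet derivative a_* = Σ_{i≥0} (∂a/∂uᵢ)·D^i applied to `g`. -/
def frechet (D : Derivation K (RR K) (RR K)) (a g : RR K) : RR K :=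
  ∑ᶠ i : ℕ, pderiv (Var.u i) a * (⇑D)^[i] g

/-- The Lie bracket [f, g] = g_*(f) − f_*(g). -/
def lieBracket (D : Derivation K (RR K) (RR K)) (f g : RR K) : RR K :=
  frechet D g f - frechet D f g

namespace Derivation

variable {R A : Type*} [CommSemiring R] [CommRing A] [Algebra R A]

theorem iterate_apply_pow_of_apply_eq_one (D : Derivation R A A) {t : A} (ht : D t = 1)
    (n i : ℕ) : (⇑D)^[i] (t ^ n) = (n.descFactorial i : A) * t ^ (n - i) := by
  induction i with
  | zero => simp
  | succ i ih =>
    rw [Function.iterate_succ_apply', ih, leibniz, leibniz_pow, ht, map_natCast,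
      Nat.descFactorial_succ, Nat.sub_sub]
    simp only [smul_eq_mul, nsmul_eq_mul, Nat.cast_mul]
    ring

/-- `Dⁱ (tⁿ)` vanishes for `i > n` and equals `n!` for `i = n`, so testing on `t⁰, t¹, …`
recovers the coefficients one at a time. -/
theorem eq_zero_of_sum_mul_iterate_pow_eq_zero [IsDomain A] [CharZero A]
    (D : Derivation R A A) {t : A} (ht : D t = 1) {N : ℕ} {a : ℕ → A}
    (h : ∀ n < N, ∑ i ∈ Finset.range N, a i * (⇑D)^[i] (t ^ n) = 0) : ∀ n < N, a n = 0 := by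
  intro n
  induction n using Nat.strong_induction_on with
  | _ n ih =>
    intro hn
    have hsum := h n hn
    rw [Finset.sum_eq_single n] at hsum
    · rwa [iterate_apply_pow_of_apply_eq_one D ht, Nat.descFactorial_self, Nat.sub_self,
        pow_zero, mul_one, mul_eq_zero, Nat.cast_eq_zero, or_iff_left n.factorial_ne_zero]
        at hsum
    · intro i hi hin
      rcases Nat.lt_or_gt_of_ne hin with hlt | hgt
      · rw [ih i hlt (hlt.trans hn), zero_mul]
      · rw [iterate_apply_pow_of_apply_eq_one D ht, Nat.descFactorial_eq_zero_iff_lt.mpr hgt,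
          Nat.cast_zero, zero_mul, mul_zero]
    · exact fun hn' => absurd (Finset.mem_range.mpr hn) hn'

end Derivation

namespace MvPolynomial

variable {σ R : Type*} [CommSemiring R]

theorem derivation_mem_supported (D : Derivation R (MvPolynomial σ R) (MvPolynomial σ R))
    {S T : Set σ} (hST : S ⊆ T) (hD : ∀ v ∈ S, D (X v) ∈ supported R T)
    {p : MvPolynomial σ R} (hp : p ∈ supported R S) : D p ∈ supported R T := by
  rw [supported_eq_adjoin_X] at hp
  induction hp using Algebra.adjoin_induction with
  | mem q hq =>
    obtain ⟨v, hv, rfl⟩ := hq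
    exact hD v hv
  | algebraMap r => simp
  | add p q _ _ hp hq => rw [map_add]; exact add_mem hp hq
  | mul p q hp' hq' hp hq =>
    rw [Derivation.leibniz, smul_eq_mul, smul_eq_mul]
    rw [← supported_eq_adjoin_X] at hp' hq'
    exact add_mem (mul_mem (supported_mono hST hp') hq) (mul_mem (supported_mono hST hq') hp)

theorem pderiv_mem_supported {S : Set σ} (v : σ) {p : MvPolynomial σ R}
    (hp : p ∈ supported R S) : pderiv v p ∈ supported R S := by
  refine derivation_mem_supported _ subset_rfl (fun w _ => ?_) hp
  by_cases hw : w = v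
  · rw [hw, pderiv_X_self]; exact one_mem _
  · rw [pderiv_X_of_ne hw]; exact zero_mem _

theorem pderiv_eq_zero_of_mem_supported {S : Set σ} {v : σ} (hv : v ∉ S)
    {p : MvPolynomial σ R} (hp : p ∈ supported R S) : pderiv v p = 0 :=
  pderiv_eq_zero_of_notMem_vars fun h => hv (mem_supported.mp hp h)

theorem notMem_vars_of_pderiv_eq_zero [NoZeroDivisors R] [CharZero R] {p : MvPolynomial σ R}
    {v : σ} (h : pderiv v p = 0) : v ∉ p.vars := by
  classical
  intro hv
  obtain ⟨s, hs, hsv⟩ := (mem_vars_iff_mem_support v).mp hv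
  have hs_eq : s - Finsupp.single v 1 + Finsupp.single v 1 = s :=
    tsub_add_cancel_of_le (Finsupp.single_le_iff.mpr
      (Nat.one_le_iff_ne_zero.mpr (Finsupp.mem_support_iff.mp hsv)))
  have hcoeff := coeff_pderiv (i := v) p (s - Finsupp.single v 1)
  rw [h, coeff_zero, hs_eq] at hcoeff
  exact mul_ne_zero (mem_support_iff.mp hs) (Nat.cast_add_one_ne_zero _) hcoeff.symm

theorem mem_supported_diff_of_pderiv_eq_zero [NoZeroDivisors R] [CharZero R] {S : Set σ}
    {v : σ} {p : MvPolynomial σ R} (hp : p ∈ supported R S) (h : pderiv v p = 0) :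
    p ∈ supported R (S \ {v}) :=
  mem_supported.mpr fun _ hw =>
    ⟨mem_supported.mp hp hw, fun hwv => notMem_vars_of_pderiv_eq_zero h (hwv ▸ hw)⟩

end MvPolynomial

def ubarOrder : Var → ℕ
  | Var.ubar j => j + 1
  | _ => 0

/-- The polynomials involving, among the `ū`, only `ū₁, …, ū_m`. -/
def ubarFiltration (R : Type*) [CommSemiring R] (m : ℕ) : Subalgebra R (RR R) :=
  supported R {v | ubarOrder v ≤ m}

section

variable {R : Type*} [CommSemiring R]

theorem ubarFiltration_mono {m n : ℕ} (h : m ≤ n) : ubarFiltration R m ≤ ubarFiltration R n :=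
  supported_mono fun _ hv => le_trans hv h

theorem pderiv_ubar_eq_zero_of_mem_ubarFiltration {m j : ℕ} (hmj : m ≤ j) {p : RR R}
    (hp : p ∈ ubarFiltration R m) : pderiv (Var.ubar j) p = 0 :=
  pderiv_eq_zero_of_mem_supported (fun h => by simp [ubarOrder] at h; omega) hp

theorem Fcal_eq_ubarFiltration_zero : Fcal R = ubarFiltration R 0 := by
  unfold Fcal ubarFiltration
  congr 1
  ext (_ | _ | _ | j) <;> simp [ubarOrder]

theorem mem_ubarFiltration_one_of_mem_supported_Fvars {F : RR R}
    (hF : F ∈ supported R Fvars) : F ∈ ubarFiltration R 1 :=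
  supported_mono (fun v hv => by rcases hv with rfl | rfl | rfl | rfl | rfl <;> simp [ubarOrder])
    hF

theorem exists_mem_ubarFiltration (p : RR R) : ∃ m, p ∈ ubarFiltration R m :=
  ⟨p.vars.sup ubarOrder, mem_supported.mpr fun _ hv => Finset.le_sup (f := ubarOrder) hv⟩

end

section Symmetry

variable {𝕜 : Type*} [Field 𝕜] (F : RR 𝕜) (D Dbar : Derivation 𝕜 (RR 𝕜) (RR 𝕜))

def symmetryOp : RR 𝕜 →ₗ[𝕜] RR 𝕜 :=
  (D : RR 𝕜 →ₗ[𝕜] RR 𝕜) ∘ₗ (Dbar : RR 𝕜 →ₗ[𝕜] RR 𝕜)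
    - LinearMap.mulLeft 𝕜 (pderiv (Var.u 1) F) ∘ₗ (D : RR 𝕜 →ₗ[𝕜] RR 𝕜)
    - LinearMap.mulLeft 𝕜 (pderiv (Var.ubar 0) F) ∘ₗ (Dbar : RR 𝕜 →ₗ[𝕜] RR 𝕜)
    - LinearMap.mulLeft 𝕜 (pderiv (Var.u 0) F)

theorem isSymmetry_iff_symmetryOp_eq_zero (g : RR 𝕜) :
    IsSymmetry F D Dbar g ↔ symmetryOp F D Dbar g = 0 :=
  Iff.rfl

theorem symmetryOp_mul_of_Dbar_eq_zero (η : RR 𝕜) {w : RR 𝕜} (hw : Dbar w = 0) :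
    symmetryOp F D Dbar (η * w)
      = symmetryOp F D Dbar η * w + (Dbar η - pderiv (Var.u 1) F * η) * D w := by
  have hDbar : Dbar (η * w) = Dbar η * w := by
    rw [Derivation.leibniz, hw, smul_zero, zero_add, smul_eq_mul, mul_comm]
  simp only [symmetryOp, LinearMap.sub_apply, LinearMap.comp_apply, LinearMap.mulLeft_apply,
    Derivation.coeFn_coe, hDbar, Derivation.leibniz, smul_eq_mul]
  ring

/-- The coefficient of `Dⁱ W` in `symmetryOp (∑ ξᵢ Dⁱ W)` when `D̄ W = 0`. -/
def driverCoeff (k : ℕ) (ξ : ℕ → RR 𝕜) : ℕ → RR 𝕜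
  | 0 => symmetryOp F D Dbar (ξ 0)
  | i + 1 => (if i + 1 ≤ k then symmetryOp F D Dbar (ξ (i + 1)) else 0)
      + (Dbar (ξ i) - pderiv (Var.u 1) F * ξ i)

theorem symmetryOp_opApply {W : RR 𝕜} (hW : ∀ i, Dbar ((⇑D)^[i] W) = 0) (k : ℕ)
    (ξ : ℕ → RR 𝕜) :
    symmetryOp F D Dbar (opApply D ξ k W)
      = ∑ i ∈ Finset.range (k + 2), driverCoeff F D Dbar k ξ i * (⇑D)^[i] W := by
  have hterm : ∀ i, symmetryOp F D Dbar (ξ i * (⇑D)^[i] W)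
      = symmetryOp F D Dbar (ξ i) * (⇑D)^[i] W
        + (Dbar (ξ i) - pderiv (Var.u 1) F * ξ i) * (⇑D)^[i + 1] W := fun i => by
    rw [symmetryOp_mul_of_Dbar_eq_zero F D Dbar _ (hW i), Function.iterate_succ_apply']
  have htrunc : ∑ i ∈ Finset.range (k + 1),
      (if i + 1 ≤ k then symmetryOp F D Dbar (ξ (i + 1)) else 0) * (⇑D)^[i + 1] W
      = ∑ i ∈ Finset.range k, symmetryOp F D Dbar (ξ (i + 1)) * (⇑D)^[i + 1] W := by
    rw [Finset.sum_range_succ, if_neg (Nat.not_succ_le_self k), zero_mul, add_zero]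
    exact Finset.sum_congr rfl fun i hi => by
      rw [if_pos (Nat.succ_le_of_lt (Finset.mem_range.mp hi))]
  rw [opApply, map_sum, Finset.sum_congr rfl fun i _ => hterm i, Finset.sum_add_distrib,
    Finset.sum_range_succ', Finset.sum_range_succ' _ (k + 1)]
  simp only [driverCoeff, add_mul, Finset.sum_add_distrib, htrunc]
  ring

end Symmetry

namespace IsTotalDerPair

variable {𝕜 : Type*} [Field 𝕜] {F : RR 𝕜} {D Dbar : Derivation 𝕜 (RR 𝕜) (RR 𝕜)}

theorem commute (hDD : IsTotalDerPair F D Dbar) (p : RR 𝕜) : D (Dbar p) = Dbar (D p) := by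
  have h : ⁅D, Dbar⁆ = 0 := by
    apply derivation_ext
    intro v
    rw [Derivation.commutator_apply, Derivation.zero_apply, sub_eq_zero]
    cases v with
    | x => rw [hDD.hDbarx, hDD.hDx, map_zero, Derivation.map_one_eq_zero]
    | y => rw [hDD.hDbary, hDD.hDy, map_zero, Derivation.map_one_eq_zero]
    | u i =>
      cases i with
      | zero => rw [hDD.hDbaru0, hDD.hDu, hDD.hDubar 0, hDD.hDbaru 0]; rfl
      | succ i => rw [hDD.hDbaru i, hDD.hDu, hDD.hDbaru (i + 1), Function.iterate_succ_apply']
    | ubar j =>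
      rw [hDD.hDbarubar j, hDD.hDubar j, hDD.hDubar (j + 1), Function.iterate_succ_apply']
  have hp := DFunLike.congr_fun h p
  rwa [Derivation.commutator_apply, Derivation.zero_apply, sub_eq_zero] at hp

theorem Dbar_iterate_D_eq_zero (hDD : IsTotalDerPair F D Dbar) {W : RR 𝕜} (hW : Dbar W = 0)
    (i : ℕ) : Dbar ((⇑D)^[i] W) = 0 := by
  induction i with
  | zero => exact hW
  | succ i ih => rw [Function.iterate_succ_apply', ← hDD.commute, ih, map_zero]

theorem D_mem_ubarFiltration_one (hDD : IsTotalDerPair F D Dbar) (hF : F ∈ supported 𝕜 Fvars)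
    {p : RR 𝕜} (hp : p ∈ ubarFiltration 𝕜 1) : D p ∈ ubarFiltration 𝕜 1 := by
  rw [ubarFiltration] at hp ⊢
  refine derivation_mem_supported D subset_rfl (fun v hv => ?_) hp
  cases v with
  | x => rw [hDD.hDx]; exact one_mem _
  | y => rw [hDD.hDy]; exact zero_mem _
  | u i => rw [hDD.hDu]; exact X_mem_supported.mpr (Nat.zero_le 1)
  | ubar j =>
    obtain rfl : j = 0 := by simpa [ubarOrder] using hv
    rw [hDD.hDubar 0, Function.iterate_zero_apply]
    exact mem_ubarFiltration_one_of_mem_supported_Fvars hF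

theorem iterate_D_mem_ubarFiltration_one (hDD : IsTotalDerPair F D Dbar)
    (hF : F ∈ supported 𝕜 Fvars) (i : ℕ) : (⇑D)^[i] F ∈ ubarFiltration 𝕜 1 := by
  induction i with
  | zero => exact mem_ubarFiltration_one_of_mem_supported_Fvars hF
  | succ i ih =>
    rw [Function.iterate_succ_apply']
    exact hDD.D_mem_ubarFiltration_one hF ih

theorem Dbar_mem_ubarFiltration_one (hDD : IsTotalDerPair F D Dbar)
    (hF : F ∈ supported 𝕜 Fvars) {p : RR 𝕜} (hp : p ∈ Fcal 𝕜) : Dbar p ∈ ubarFiltration 𝕜 1 := by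
  rw [Fcal_eq_ubarFiltration_zero, ubarFiltration] at hp
  rw [ubarFiltration]
  refine derivation_mem_supported Dbar (fun _ hv => hv.trans (Nat.zero_le 1)) (fun v hv => ?_) hp
  cases v with
  | x => rw [hDD.hDbarx]; exact zero_mem _
  | y => rw [hDD.hDbary]; exact one_mem _
  | u i =>
    cases i with
    | zero => rw [hDD.hDbaru0]; exact X_mem_supported.mpr (show 1 ≤ 1 from le_rfl)
    | succ i => rw [hDD.hDbaru i]; exact hDD.iterate_D_mem_ubarFiltration_one hF i
  | ubar j => simp [ubarOrder] at hv

/-- `D̄` raises the ū-order by exactly one: the only source of `ū_{m+2}` in `D̄ p` is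
`D̄ ū_{m+1} = ū_{m+2}`. -/
theorem pderiv_ubar_succ_Dbar (hDD : IsTotalDerPair F D Dbar) (hF : F ∈ supported 𝕜 Fvars)
    {m : ℕ} {p : RR 𝕜} (hp : p ∈ ubarFiltration 𝕜 (m + 1)) :
    pderiv (Var.ubar (m + 1)) (Dbar p) = pderiv (Var.ubar m) p := by
  rw [ubarFiltration, supported_eq_adjoin_X] at hp
  induction hp using Algebra.adjoin_induction with
  | mem q hq =>
    obtain ⟨v, hv, rfl⟩ := hq
    cases v with
    | x => rw [hDD.hDbarx, map_zero, pderiv_X_of_ne Var.noConfusion]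
    | y => rw [hDD.hDbary, pderiv_one, pderiv_X_of_ne Var.noConfusion]
    | u i =>
      rw [pderiv_X_of_ne Var.noConfusion]
      cases i with
      | zero => rw [hDD.hDbaru0, pderiv_X_of_ne (by simp)]
      | succ i =>
        rw [hDD.hDbaru i]
        exact pderiv_ubar_eq_zero_of_mem_ubarFiltration (by omega)
          (hDD.iterate_D_mem_ubarFiltration_one hF i)
    | ubar j =>
      rw [hDD.hDbarubar j]
      by_cases hjm : j = m
      · rw [hjm, pderiv_X_self, pderiv_X_self]
      · rw [pderiv_X_of_ne (by simpa using hjm), pderiv_X_of_ne (by simpa using hjm)]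
  | algebraMap r => simp
  | add p q _ _ hp hq => rw [map_add, map_add, map_add, hp, hq]
  | mul p q hp' hq' hp hq =>
    rw [← supported_eq_adjoin_X] at hp' hq'
    rw [Derivation.leibniz, smul_eq_mul, smul_eq_mul, map_add, pderiv_mul, pderiv_mul,
      pderiv_mul, pderiv_ubar_eq_zero_of_mem_ubarFiltration le_rfl hp',
      pderiv_ubar_eq_zero_of_mem_ubarFiltration le_rfl hq', hp, hq]
    ring

/-- If `ξ` involved some `ū_{m+1}`, `D̄ ξ` would involve `ū_{m+2}`, which the right-hand side
does not. -/
theorem mem_Fcal_of_Dbar_eq [CharZero 𝕜] (hDD : IsTotalDerPair F D Dbar)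
    (hF : F ∈ supported 𝕜 Fvars) {ξ C : RR 𝕜} (hC : C ∈ ubarFiltration 𝕜 1)
    (heq : Dbar ξ = pderiv (Var.u 1) F * ξ + C) :
    ξ ∈ Fcal 𝕜 := by
  have hFu : pderiv (Var.u 1) F ∈ ubarFiltration 𝕜 1 :=
    pderiv_mem_supported _ (mem_ubarFiltration_one_of_mem_supported_Fvars hF)
  obtain ⟨M, hM⟩ := exists_mem_ubarFiltration ξ
  rw [Fcal_eq_ubarFiltration_zero]
  induction M with
  | zero => exact hM
  | succ m ih =>
    refine ih ?_
    have hpd : pderiv (Var.ubar m) ξ = 0 := by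
      rw [← hDD.pderiv_ubar_succ_Dbar hF hM, heq, map_add, pderiv_mul,
        pderiv_ubar_eq_zero_of_mem_ubarFiltration (by omega) hFu,
        pderiv_ubar_eq_zero_of_mem_ubarFiltration le_rfl hM,
        pderiv_ubar_eq_zero_of_mem_ubarFiltration (by omega) hC]
      ring
    refine supported_mono (fun v hv => ?_) (mem_supported_diff_of_pderiv_eq_zero hM hpd)
    obtain ⟨hv, hvm⟩ := hv
    cases v <;> simp_all [ubarOrder]
    omega

theorem symmetryOp_mem_ubarFiltration_one (hDD : IsTotalDerPair F D Dbar)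
    (hF : F ∈ supported 𝕜 Fvars) {η : RR 𝕜} (hη : η ∈ Fcal 𝕜) :
    symmetryOp F D Dbar η ∈ ubarFiltration 𝕜 1 := by
  have hF1 := mem_ubarFiltration_one_of_mem_supported_Fvars hF
  have hη1 : η ∈ ubarFiltration 𝕜 1 :=
    ubarFiltration_mono (Nat.zero_le 1) (Fcal_eq_ubarFiltration_zero (R := 𝕜) ▸ hη)
  have hDbar := hDD.Dbar_mem_ubarFiltration_one hF hη
  refine sub_mem (sub_mem (sub_mem (hDD.D_mem_ubarFiltration_one hF hDbar) ?_) ?_) ?_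
  · exact mul_mem (pderiv_mem_supported _ hF1) (hDD.D_mem_ubarFiltration_one hF hη1)
  · exact mul_mem (pderiv_mem_supported _ hF1) hDbar
  · exact mul_mem (pderiv_mem_supported _ hF1) hη1

theorem driverCoeff_eq_zero [CharZero 𝕜] (hDD : IsTotalDerPair F D Dbar) {k : ℕ}
    {ξ : ℕ → RR 𝕜} (hdrv : IsDriver F D Dbar k ξ) :
    ∀ i < k + 2, driverCoeff F D Dbar k ξ i = 0 := by
  refine Derivation.eq_zero_of_sum_mul_iterate_pow_eq_zero D hDD.hDx fun n _ => ?_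
  have hx : Dbar (X Var.x ^ n) = 0 := by
    rw [Derivation.leibniz_pow, hDD.hDbarx, smul_zero, smul_zero]
  rw [← symmetryOp_opApply F D Dbar (hDD.Dbar_iterate_D_eq_zero hx)]
  exact (isSymmetry_iff_symmetryOp_eq_zero F D Dbar _).mp (hdrv.2 _ hx)

end IsTotalDerPair

/-- the coefficients of any x-symmetry driver lie in 𝓕 and the leading
coefficient satisfies D̄(ξ_k) = F_{u₁}·ξ_k. -/
theorem statement3
    (F : RR K) (hF : F ∈ MvPolynomial.supported K Fvars)
    (D Dbar : Derivation K (RR K) (RR K)) (hDD : IsTotalDerPair F D Dbar)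
    (k : ℕ) (ξ : ℕ → RR K) (hdrv : IsDriver F D Dbar k ξ) :
    (∀ i ≤ k, ξ i ∈ Fcal K) ∧ Dbar (ξ k) = pderiv (Var.u 1) F * ξ k := by
  have hc := hDD.driverCoeff_eq_zero hdrv
  have hlead : Dbar (ξ k) = pderiv (Var.u 1) F * ξ k := by
    have h := hc (k + 1) (by omega)
    simp only [driverCoeff, if_neg (Nat.not_succ_le_self k), zero_add] at h
    linear_combination h
  refine ⟨fun i hi => ?_, hlead⟩
  induction hi using Nat.decreasingInduction with
  | self => exact hDD.mem_Fcal_of_Dbar_eq hF (zero_mem _) (by rw [hlead, add_zero])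
  | of_succ i hik ih =>
    refine hDD.mem_Fcal_of_Dbar_eq hF (neg_mem (hDD.symmetryOp_mem_ubarFiltration_one hF ih)) ?_
    have h := hc (i + 1) (by omega)
    simp only [driverCoeff, if_pos (Nat.succ_le_of_lt hik)] at h
    linear_combination h
end
end

section
/- Let M = Σ_{i=0}^k ξ_i·D^i be an x-symmetry driver for the equation u_{xy} = F. Then the coefficients satisfy: (D̄ − ∂F/∂u_1)(ξ_k) = 0, and for every 1 ≤ i ≤ k, (D̄ − ∂F/∂u_1)(ξ_{i−1}) = ( (∂F/∂u_0) + (∂F/∂u_1)·D + (∂F/∂ū_1)·D̄ − D∘D̄ )(ξ_i). -/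
open MvPolynomial

noncomputable section

variable {K : Type*} [Field K] [CharZero K]

/-!
Since `D x = 1` and `D̄ x = 0`, every power `W = x^m` is an x-integral, and so are all its
derivatives `D^i W = m(m-1)⋯(m-i+1) x^(m-i)`. Because `D̄` kills the `D^i W`, the linearized
operator `L` applied to `Σ ξ_i D^i W` equals `Σ_i L(ξ_i) D^i W + Σ_i ((D̄ - F_{u₁}) ξ_i) D^(i+1) W`.
Its vanishing for all `m` is a triangular system with diagonal `m!`, so all coefficients of `D^i W` vanish; these are the claimed identities.
-/

section Derivation

variable {R A : Type*} [CommRing R] [CommRing A] [Algebra R A]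

theorem Derivation.iterate_apply_pow (D : Derivation R A A) {t : A} (ht : D t = 1) (i m : ℕ) :
    (⇑D)^[i] (t ^ m) = (m.descFactorial i : A) * t ^ (m - i) := by
  induction i with
  | zero => simp
  | succ i ih =>
    rw [Function.iterate_succ_apply', ih, Derivation.leibniz, Derivation.map_natCast,
      Derivation.leibniz_pow, ht, Nat.descFactorial_succ, Nat.sub_sub]
    simp only [smul_eq_mul, mul_one, mul_zero, add_zero, Nat.cast_mul]
    ring

theorem Derivation.apply_iterate_apply_pow_eq_zero (D Dbar : Derivation R A A) {t : A}
    (hDt : D t = 1) (hDbart : Dbar t = 0) (i m : ℕ) : Dbar ((⇑D)^[i] (t ^ m)) = 0 := by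
  rw [D.iterate_apply_pow hDt, Derivation.leibniz, Derivation.map_natCast,
    Derivation.leibniz_pow, hDbart]
  simp

/-- The operators `D^i` are linearly independent over `A`: they are told apart by the
powers of an element `t` with `D t = 1`. -/
theorem Derivation.eq_zero_of_sum_mul_iterate_apply_pow_eq_zero [IsDomain A] [CharZero A]
    (D : Derivation R A A) {t : A} (ht : D t = 1) {n : ℕ} {c : ℕ → A}
    (h : ∀ m, ∑ i ∈ Finset.range n, c i * (⇑D)^[i] (t ^ m) = 0) : ∀ m < n, c m = 0 := by
  intro m
  induction m using Nat.strong_induction_on with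
  | _ m ih =>
    intro hm
    have hdiag : ∑ i ∈ Finset.range n, c i * (⇑D)^[i] (t ^ m) = c m * (m.factorial : A) := by
      rw [Finset.sum_eq_single_of_mem m (Finset.mem_range.2 hm)]
      · rw [D.iterate_apply_pow ht, Nat.descFactorial_self, Nat.sub_self, pow_zero, mul_one]
      · intro i hi hne
        rcases lt_or_gt_of_ne hne with hlt | hgt
        · rw [ih i hlt (Finset.mem_range.1 hi), zero_mul]
        · rw [D.iterate_apply_pow ht, Nat.descFactorial_eq_zero_iff_lt.2 hgt, Nat.cast_zero,
            zero_mul, mul_zero]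
    have hm' := h m
    rw [hdiag] at hm'
    exact (mul_eq_zero.1 hm').resolve_right (Nat.cast_ne_zero.2 m.factorial_ne_zero)

/-- The linearization `g ↦ D D̄ g - a D g - b D̄ g - c g` of a hyperbolic equation
`u_{xy} = F`, with `a = F_{u₁}`, `b = F_{ū₁}`, `c = F_{u₀}`. -/
def linearization (D Dbar : Derivation R A A) (a b c g : A) : A :=
  D (Dbar g) - a * D g - b * Dbar g - c * g

theorem linearization_sum_mul (D Dbar : Derivation R A A) (a b c : A) {d : ℕ → A}
    (hDbar : ∀ i, Dbar (d i) = 0) (hD : ∀ i, D (d i) = d (i + 1)) (ξ : ℕ → A) (n : ℕ) :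
    linearization D Dbar a b c (∑ i ∈ Finset.range n, ξ i * d i) =
      ∑ i ∈ Finset.range n,
        (linearization D Dbar a b c (ξ i) * d i + (Dbar (ξ i) - a * ξ i) * d (i + 1)) := by
  have hDbar_sum : Dbar (∑ i ∈ Finset.range n, ξ i * d i) =
      ∑ i ∈ Finset.range n, Dbar (ξ i) * d i := by
    refine map_sum Dbar _ _ |>.trans (Finset.sum_congr rfl fun i _ => ?_)
    rw [Derivation.leibniz, hDbar, smul_zero, zero_add, smul_eq_mul, mul_comm]
  simp only [linearization, hDbar_sum, map_sum, Derivation.leibniz, hD, smul_eq_mul,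
    Finset.mul_sum, ← Finset.sum_sub_distrib]
  exact Finset.sum_congr rfl fun i _ => by ring

theorem sum_mul_add_mul_succ_eq (p q d : ℕ → A) (n : ℕ) :
    ∑ i ∈ Finset.range n, (p i * d i + q i * d (i + 1)) =
      ∑ i ∈ Finset.range (n + 1),
        ((if i < n then p i else 0) + (if i = 0 then 0 else q (i - 1))) * d i := by
  simp only [add_mul, Finset.sum_add_distrib]
  congr 1
  · rw [Finset.sum_range_succ, if_neg (lt_irrefl n), zero_mul, add_zero]
    exact Finset.sum_congr rfl fun i hi => by rw [if_pos (Finset.mem_range.1 hi)]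
  · rw [Finset.sum_range_succ', if_pos rfl, zero_mul, add_zero]
    simp only [Nat.succ_ne_zero, if_false, Nat.add_sub_cancel]

theorem linearization_coeffs_of_forall_pow [IsDomain A] [CharZero A]
    (D Dbar : Derivation R A A) {t : A} (hDt : D t = 1) (hDbart : Dbar t = 0) (a b c : A)
    (ξ : ℕ → A) (n : ℕ)
    (h : ∀ m,
      linearization D Dbar a b c (∑ i ∈ Finset.range (n + 1), ξ i * (⇑D)^[i] (t ^ m)) = 0) :
    (Dbar (ξ n) - a * ξ n = 0) ∧
    (∀ i, 1 ≤ i → i ≤ n →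
      Dbar (ξ (i - 1)) - a * ξ (i - 1) =
        c * ξ i + a * D (ξ i) + b * Dbar (ξ i) - D (Dbar (ξ i))) := by
  have hcoeff := D.eq_zero_of_sum_mul_iterate_apply_pow_eq_zero hDt (n := n + 1 + 1)
    (c := fun i => (if i < n + 1 then linearization D Dbar a b c (ξ i) else 0) +
      (if i = 0 then 0 else Dbar (ξ (i - 1)) - a * ξ (i - 1)))
    fun m => by
      rw [← sum_mul_add_mul_succ_eq (fun i => linearization D Dbar a b c (ξ i))
        (fun i => Dbar (ξ i) - a * ξ i), ← h m, linearization_sum_mul _ _ _ _ _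
        (D.apply_iterate_apply_pow_eq_zero Dbar hDt hDbart · m)
        (fun i => (Function.iterate_succ_apply' D i _).symm)]
  refine ⟨?_, fun i hi hin => ?_⟩
  · simpa using hcoeff (n + 1) (by omega)
  · have hi' := hcoeff i (by omega)
    simp only [if_pos (Nat.lt_succ_of_le hin), if_neg (by omega : i ≠ 0), linearization] at hi'
    linear_combination hi'

end Derivation

theorem statement4_general
    (F : RR K)
    (D Dbar : Derivation K (RR K) (RR K)) (hDD : IsTotalDerPair F D Dbar)
    (k : ℕ) (ξ : ℕ → RR K) (hdrv : IsDriver F D Dbar k ξ) :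
    (Dbar (ξ k) - pderiv (Var.u 1) F * ξ k = 0) ∧
    (∀ i : ℕ, 1 ≤ i → i ≤ k →
      Dbar (ξ (i - 1)) - pderiv (Var.u 1) F * ξ (i - 1) =
        pderiv (Var.u 0) F * ξ i + pderiv (Var.u 1) F * D (ξ i)
          + pderiv (Var.ubar 0) F * Dbar (ξ i) - D (Dbar (ξ i))) :=
  linearization_coeffs_of_forall_pow D Dbar hDD.hDx hDD.hDbarx _ _ _ ξ k fun m =>
    hdrv.2 _ (by rw [Derivation.leibniz_pow, hDD.hDbarx, smul_zero, smul_zero])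

/-- the coefficients of an x-symmetry driver satisfy
(D̄ − F_{u₁})(ξ_k) = 0 and, for 1 ≤ i ≤ k,
(D̄ − F_{u₁})(ξ_{i−1}) = (F_{u₀} + F_{u₁}·D + F_{ū₁}·D̄ − D∘D̄)(ξ_i). -/
theorem statement4
    (F : RR K) (hF : F ∈ MvPolynomial.supported K Fvars)
    (D Dbar : Derivation K (RR K) (RR K)) (hDD : IsTotalDerPair F D Dbar)
    (k : ℕ) (ξ : ℕ → RR K) (hdrv : IsDriver F D Dbar k ξ) :
    (Dbar (ξ k) - pderiv (Var.u 1) F * ξ k = 0) ∧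
    (∀ i : ℕ, 1 ≤ i → i ≤ k →
      Dbar (ξ (i - 1)) - pderiv (Var.u 1) F * ξ (i - 1) =
        pderiv (Var.u 0) F * ξ i + pderiv (Var.u 1) F * D (ξ i)
          + pderiv (Var.ubar 0) F * Dbar (ξ i) - D (Dbar (ξ i))) :=
  statement4_general F D Dbar hDD k ξ hdrv
end
end

section
/- Suppose the equation u_{xy} = F admits an x-symmetry driver; let k be the smallest order of such a driver, and assume H_1, …, H_k are all nonzero in Frac(R). Then: (i) H_{k+1} = 0; (ii) there exists a nonzero ψ ∈ R with D̄(ψ) = (∂F/∂u_1)·ψ; and (iii) every x-symmetry driver of order k equals the operator 𝓜 given by the Laplace factorization formula with r = k+1 for some nonzero ψ ∈ R satisfying D̄(ψ) = (∂F/∂u_1)·ψ. -/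
open MvPolynomial

noncomputable section

variable {K : Type*} [Field K] [CharZero K]

/-- The fraction field Frac(R). -/
abbrev FF (K : Type*) [Field K] : Type _ := FractionRing (RR K)

/-- `DF` extends the derivation `D` of R to the fraction field Frac(R). -/
def ExtendsTo (D : Derivation K (RR K) (RR K)) (DF : Derivation K (FF K) (FF K)) : Prop :=
  ∀ p : RR K, DF (algebraMap (RR K) (FF K) p) = algebraMap (RR K) (FF K) (D p)

/-- The Laplace invariant H₁ = −D(F_{u₁}) + F_{u₁}·F_{ū₁} + F_{u₀} (computed in R). -/
def H1R (F : RR K) (D : Derivation K (RR K) (RR K)) : RR K :=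
  -(D (pderiv (Var.u 1) F)) + pderiv (Var.u 1) F * pderiv (Var.ubar 0) F
    + pderiv (Var.u 0) F

/-- The Laplace invariant H₀ = −D̄(F_{ū₁}) + F_{u₁}·F_{ū₁} + F_{u₀} (computed in R). -/
def H0R (F : RR K) (Dbar : Derivation K (RR K) (RR K)) : RR K :=
  -(Dbar (pderiv (Var.ubar 0) F)) + pderiv (Var.u 1) F * pderiv (Var.ubar 0) F
    + pderiv (Var.u 0) F

/-- The sequence of Laplace invariants in Frac(R), defined by
H_{i+1} = 2H_i − H_{i−1} − D(D̄(H_i)/H_i) (whenever H_i ≠ 0; division is the field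
division of Frac(R)). -/
def Hseq (Df Dbarf : FF K → FF K) (H0 H1 : FF K) : ℕ → FF K
  | 0 => H0
  | 1 => H1
  | (n + 2) =>
      2 * Hseq Df Dbarf H0 H1 (n + 1) - Hseq Df Dbarf H0 H1 n
        - Df (Dbarf (Hseq Df Dbarf H0 H1 (n + 1)) / Hseq Df Dbarf H0 H1 (n + 1))

/-- Auxiliary composition: `lapAux Df c H j g` is
(1/H₁)(D − c) ∘ (1/H₂)(D − c) ∘ ⋯ ∘ (1/H_j)(D − c) ∘ g. -/
def lapAux (Df : FF K → FF K) (c : FF K) (H : ℕ → FF K) : ℕ → (FF K → FF K) → FF K → FF K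
  | 0, g, a => g a
  | (j + 1), g, a => lapAux Df c H j (fun b => (Df (g b) - c * g b) / H (j + 1)) a

/-- The Laplace factorization formula: for r > 1,
𝓜 = (1/H₁)(D − F_{ū₁}) ∘ ⋯ ∘ (1/H_{r−1})(D − F_{ū₁}) ∘ (H_{r−1}⋯H₁·ψ ·);
for r = 1, 𝓜 is multiplication by ψ. -/
def lapM (Df : FF K → FF K) (c : FF K) (H : ℕ → FF K) (ψ : FF K) (r : ℕ) : FF K → FF K :=
  lapAux Df c H (r - 1) (fun a => (∏ i ∈ Finset.Icc 1 (r - 1), H i) * ψ * a)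

/-- The symmetry condition, understood in Frac(R). -/
def IsSymmetryFF (F : RR K) (DF DbarF : Derivation K (FF K) (FF K)) (g : FF K) : Prop :=
  DF (DbarF g) - algebraMap (RR K) (FF K) (pderiv (Var.u 1) F) * DF g
    - algebraMap (RR K) (FF K) (pderiv (Var.ubar 0) F) * DbarF g
    - algebraMap (RR K) (FF K) (pderiv (Var.u 0) F) * g = 0

/-! Applying a driver `M = ∑ ξᵢ Dⁱ` to the x-integrals `xᵐ` and comparing coefficients gives
`L ξⱼ + (D̄ - F_{u₁}) ξ_{j-1} = 0` for the linearization `L`; in particular `(D̄ - F_{u₁}) ξₖ = 0`.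
These relations say `(D - F_{ū₁}) ∘ M₁ = H₁ M₀` with `M₀ = M` and `M₁` of order `< k`. Since `D` and
`D̄` commute, twisting `D̄` by `aⱼ = F_{u₁} + D̄ log (H₁ ⋯ Hⱼ)` propagates this to
`(D - F_{ū₁}) ∘ M_{j+1} = H_{j+1} Mⱼ`, where `Mⱼ` has order `k - j` and leading coefficient
`H₁ ⋯ Hⱼ ξₖ`, as long as `H_{j+1} ≠ 0`. At `j = k` the operator `M_{k+1}` vanishes, which forces
`H_{k+1} H₁ ⋯ Hₖ ξₖ = 0`, and unwinding the factorizations expresses `M` by the Laplace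
factorization formula. -/

open Finset

section OrdinaryOperators

variable {R A : Type*} [CommRing R] [CommRing A] [Algebra R A] (D : Derivation R A A)

theorem Derivation.iterate_apply_pow_s6 {x : A} (hx : D x = 1) (j m : ℕ) :
    (⇑D)^[j] (x ^ m) = m.descFactorial j • x ^ (m - j) := by
  induction j with
  | zero => simp
  | succ j ih =>
    rw [Function.iterate_succ_apply', ih, map_nsmul, Derivation.leibniz_pow, hx, smul_eq_mul,
      mul_one, smul_smul, Nat.descFactorial_succ, Nat.sub_sub, mul_comm]

theorem Derivation.eq_zero_of_opApply_pow_eq_zero [NoZeroDivisors A] [CharZero A] {x : A}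
    (hx : D x = 1) {c : ℕ → A} {n : ℕ} (h : ∀ m, opApply D c n (x ^ m) = 0) :
    ∀ j ≤ n, c j = 0 := by
  intro j
  induction j using Nat.strong_induction_on with
  | _ j ih =>
    intro hjn
    have hj := h j
    rw [opApply, Finset.sum_eq_single_of_mem j (by simp; omega)] at hj
    · rw [D.iterate_apply_pow_s6 hx, Nat.descFactorial_self, Nat.sub_self, pow_zero,
        nsmul_eq_mul, mul_one] at hj
      exact (mul_eq_zero.mp hj).resolve_right (by exact_mod_cast j.factorial_ne_zero)
    · intro i hi hij
      rcases lt_or_gt_of_ne hij with hlt | hgt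
      · rw [ih i hlt (by omega), zero_mul]
      · rw [D.iterate_apply_pow_s6 hx, Nat.descFactorial_eq_zero_iff_lt.mpr hgt, zero_smul,
          mul_zero]

theorem apply_iterate_eq_zero {E : A → A} (hcomm : ∀ a, D (E a) = E (D a))
    {w : A} (hw : E w = 0) (i : ℕ) : E ((⇑D)^[i] w) = 0 := by
  rw [← Function.Commute.iterate_left hcomm i w, hw, iterate_map_zero]

theorem sum_range_mul_add_mul_succ (p q f : ℕ → A) (k : ℕ) :
    ∑ i ∈ range (k + 1), (p i * f i + q i * f (i + 1)) =
      ∑ j ∈ range (k + 2),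
        ((if j ≤ k then p j else 0) + (if j = 0 then 0 else q (j - 1))) * f j := by
  simp only [add_mul, Finset.sum_add_distrib]
  rw [Finset.sum_range_succ _ (k + 1), Finset.sum_range_succ' _ (k + 1)]
  simp only [if_neg (by omega : ¬k + 1 ≤ k), zero_mul, add_zero, Nat.add_one_ne_zero,
    if_false, Nat.add_sub_cancel, if_pos]
  congr 1
  exact Finset.sum_congr rfl fun i hi => by
    rw [if_pos (Nat.lt_succ_iff.mp (Finset.mem_range.mp hi))]

theorem opApply_succ_of_eq_zero {p : ℕ → A} {n : ℕ} (hp : p (n + 1) = 0) (w : A) :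
    opApply D p (n + 1) w = opApply D p n w := by
  rw [opApply, Finset.sum_range_succ, hp, zero_mul, add_zero, opApply]

theorem sub_mul_opApply_eq_of_coeff {b h : A} {p q : ℕ → A} {n : ℕ}
    (hpq : ∀ i ≤ n, D (p i) - b * p i = h * q i - (if i = 0 then 0 else p (i - 1)))
    (hn : p n = 0) (w : A) :
    D (opApply D p n w) - b * opApply D p n w = h * opApply D q n w := by
  have hexp : D (opApply D p n w) - b * opApply D p n w =
      ∑ i ∈ range (n + 1), ((D (p i) - b * p i) * (⇑D)^[i] w + p i * (⇑D)^[i + 1] w) := by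
    simp only [opApply, map_sum, Derivation.leibniz, smul_eq_mul, Finset.mul_sum,
      ← Finset.sum_sub_distrib, Function.iterate_succ_apply']
    exact Finset.sum_congr rfl fun i _ => by ring
  have hshift : ∑ i ∈ range (n + 1), (if i = 0 then 0 else p (i - 1)) * (⇑D)^[i] w =
      ∑ i ∈ range (n + 1), p i * (⇑D)^[i + 1] w := by
    rw [Finset.sum_range_succ', Finset.sum_range_succ _ n, hn]
    simp
  rw [hexp, opApply, Finset.mul_sum,
    Finset.sum_congr rfl fun i hi => by rw [hpq i (Nat.lt_succ_iff.mp (Finset.mem_range.mp hi))]]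
  simp only [sub_mul, Finset.sum_add_distrib, Finset.sum_sub_distrib, hshift, mul_assoc]
  ring

end OrdinaryOperators

section LaplaceCascade

variable {R A : Type*} [CommRing R] [Field A] [Algebra R A] (D Dbar : Derivation R A A)
  (a₀ b : A) (H ξ : ℕ → A)

/-- `laplaceTwist Dbar a₀ H j = a₀ + D̄ log (H₁ ⋯ Hⱼ)`. -/
def laplaceTwist : ℕ → A
  | 0 => a₀
  | j + 1 => laplaceTwist j + Dbar (H (j + 1)) / H (j + 1)

def cascadeCoeff : ℕ → ℕ → A
  | 0 => ξ
  | j + 1 => fun i =>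
      Dbar (cascadeCoeff j i) - laplaceTwist Dbar a₀ H j * cascadeCoeff j i

/-- The coefficientwise form of `(D - b) ∘ M_{j+1} = H_{j+1} Mⱼ`, where
`Mⱼ = ∑_{i ≤ n} cascadeCoeff … j i • Dⁱ` and the top coefficient of `M_{j+1}` vanishes. -/
def CascadeLevel (j n : ℕ) : Prop :=
  cascadeCoeff Dbar a₀ H ξ (j + 1) n = 0 ∧
    ∀ i ≤ n, D (cascadeCoeff Dbar a₀ H ξ (j + 1) i) - b * cascadeCoeff Dbar a₀ H ξ (j + 1) i =
      H (j + 1) * cascadeCoeff Dbar a₀ H ξ j i -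
        (if i = 0 then 0 else cascadeCoeff Dbar a₀ H ξ (j + 1) (i - 1))

variable {D Dbar a₀ b H ξ}

@[simp]
theorem cascadeCoeff_zero : cascadeCoeff Dbar a₀ H ξ 0 = ξ :=
  rfl

theorem cascadeCoeff_succ (j i : ℕ) :
    cascadeCoeff Dbar a₀ H ξ (j + 1) i =
      Dbar (cascadeCoeff Dbar a₀ H ξ j i) -
        laplaceTwist Dbar a₀ H j * cascadeCoeff Dbar a₀ H ξ j i :=
  rfl

theorem laplaceTwist_rel (h0 : Dbar b - D a₀ = H 1 - H 0)
    (hrec : ∀ n, H (n + 2) = 2 * H (n + 1) - H n - D (Dbar (H (n + 1)) / H (n + 1))) :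
    ∀ j, Dbar b - D (laplaceTwist Dbar a₀ H j) = H (j + 1) - H j
  | 0 => h0
  | j + 1 => by
    rw [laplaceTwist, map_add, hrec j]
    linear_combination laplaceTwist_rel h0 hrec j

theorem twist_mul_of_ne_zero {h : A} (hh : h ≠ 0) (a θ : A) :
    Dbar (h * θ) - (a + Dbar h / h) * (h * θ) = h * (Dbar θ - a * θ) := by
  rw [Derivation.leibniz, smul_eq_mul, smul_eq_mul]
  field_simp
  ring

theorem sub_mul_twist_of_comm (hcomm : ∀ z, D (Dbar z) = Dbar (D z)) (a μ : A) :
    D (Dbar μ - a * μ) - b * (Dbar μ - a * μ) =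
      Dbar (D μ - b * μ) - a * (D μ - b * μ) + (Dbar b - D a) * μ := by
  simp only [map_sub, Derivation.leibniz, smul_eq_mul, hcomm]
  ring

theorem CascadeLevel.top {j n : ℕ} (h : CascadeLevel D Dbar a₀ b H ξ j (n + 1)) :
    cascadeCoeff Dbar a₀ H ξ (j + 1) n = H (j + 1) * cascadeCoeff Dbar a₀ H ξ j (n + 1) := by
  have := h.2 (n + 1) le_rfl
  rw [h.1, map_zero, mul_zero, sub_zero, if_neg n.succ_ne_zero, Nat.add_sub_cancel] at this
  linear_combination this

theorem CascadeLevel.mul_coeff_eq_zero {j : ℕ} (h : CascadeLevel D Dbar a₀ b H ξ j 0) :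
    H (j + 1) * cascadeCoeff Dbar a₀ H ξ j 0 = 0 := by
  have := h.2 0 le_rfl
  rw [h.1, map_zero, mul_zero, sub_zero, if_pos rfl, sub_zero] at this
  exact this.symm

theorem CascadeLevel.succ (hcomm : ∀ z, D (Dbar z) = Dbar (D z))
    (hrel : ∀ j, Dbar b - D (laplaceTwist Dbar a₀ H j) = H (j + 1) - H j)
    {j n : ℕ} (hH : H (j + 1) ≠ 0) (h : CascadeLevel D Dbar a₀ b H ξ j (n + 1)) :
    CascadeLevel D Dbar a₀ b H ξ (j + 1) n := by
  refine ⟨?_, fun i hi => ?_⟩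
  · rw [cascadeCoeff_succ, h.top, laplaceTwist, twist_mul_of_ne_zero hH]
    exact mul_eq_zero_of_right _ h.1
  · have ht := twist_mul_of_ne_zero (Dbar := Dbar) hH (laplaceTwist Dbar a₀ H j)
      (cascadeCoeff Dbar a₀ H ξ j i)
    rw [← cascadeCoeff_succ] at ht
    rw [cascadeCoeff_succ (j + 1) i, sub_mul_twist_of_comm hcomm, h.2 i (by omega), hrel (j + 1),
      laplaceTwist]
    split_ifs
    · rw [sub_zero]
      linear_combination ht
    · rw [cascadeCoeff_succ (j + 1) (i - 1), laplaceTwist, map_sub]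
      linear_combination ht

theorem cascadeLevel_of_le (hcomm : ∀ z, D (Dbar z) = Dbar (D z))
    (hrel : ∀ j, Dbar b - D (laplaceTwist Dbar a₀ H j) = H (j + 1) - H j) {k : ℕ}
    (hH : ∀ i, 1 ≤ i → i ≤ k → H i ≠ 0) (h0 : CascadeLevel D Dbar a₀ b H ξ 0 k) :
    ∀ j ≤ k, CascadeLevel D Dbar a₀ b H ξ j (k - j)
  | 0, _ => h0
  | j + 1, hj => by
    have h := cascadeLevel_of_le hcomm hrel hH h0 j (by omega)
    rw [show k - j = k - (j + 1) + 1 by omega] at h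
    exact h.succ hcomm hrel (hH (j + 1) (by omega) hj)

theorem CascadeLevel.sub_mul_opApply {j n : ℕ} (h : CascadeLevel D Dbar a₀ b H ξ j (n + 1))
    (w : A) :
    D (opApply D (cascadeCoeff Dbar a₀ H ξ (j + 1)) n w) -
        b * opApply D (cascadeCoeff Dbar a₀ H ξ (j + 1)) n w =
      H (j + 1) * opApply D (cascadeCoeff Dbar a₀ H ξ j) (n + 1) w := by
  rw [← opApply_succ_of_eq_zero D h.1]
  exact sub_mul_opApply_eq_of_coeff D h.2 h.1 w

theorem cascadeCoeff_top {k : ℕ} (h : ∀ j ≤ k, CascadeLevel D Dbar a₀ b H ξ j (k - j)) :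
    ∀ j ≤ k, cascadeCoeff Dbar a₀ H ξ j (k - j) = (∏ i ∈ Icc 1 j, H i) * ξ k
  | 0, _ => by simp
  | j + 1, hj => by
    have hl := h j (by omega)
    rw [show k - j = k - (j + 1) + 1 by omega] at hl
    rw [hl.top, ← show k - j = k - (j + 1) + 1 by omega, cascadeCoeff_top h j (by omega),
      Finset.prod_Icc_succ_top (by omega)]
    ring

end LaplaceCascade

section TotalDerivatives

variable {𝕜 : Type*} [Field 𝕜] {F : RR 𝕜} {D Dbar : Derivation 𝕜 (RR 𝕜) (RR 𝕜)}

theorem IsTotalDerPair.comm (hDD : IsTotalDerPair F D Dbar) (p : RR 𝕜) :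
    D (Dbar p) = Dbar (D p) := by
  have hbracket : ⁅D, Dbar⁆ = 0 := by
    refine MvPolynomial.derivation_ext fun v => ?_
    rw [Derivation.commutator_apply, Derivation.zero_apply, sub_eq_zero]
    match v with
    | Var.x => rw [hDD.hDx, hDD.hDbarx, map_zero, Derivation.map_one_eq_zero]
    | Var.y => rw [hDD.hDy, hDD.hDbary, map_zero, Derivation.map_one_eq_zero]
    | Var.u 0 => rw [hDD.hDbaru0, hDD.hDu 0, hDD.hDbaru 0, hDD.hDubar 0]; rfl
    | Var.u (i + 1) =>
      rw [hDD.hDbaru i, hDD.hDu (i + 1), hDD.hDbaru (i + 1), Function.iterate_succ_apply']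
    | Var.ubar j =>
      rw [hDD.hDbarubar j, hDD.hDubar j, hDD.hDubar (j + 1), Function.iterate_succ_apply']
  simpa [Derivation.commutator_apply, sub_eq_zero] using congrArg (· p) hbracket

def linOp (F : RR 𝕜) (D Dbar : Derivation 𝕜 (RR 𝕜) (RR 𝕜)) : RR 𝕜 →ₗ[𝕜] RR 𝕜 :=
  D.toLinearMap ∘ₗ Dbar.toLinearMap - LinearMap.mulLeft 𝕜 (pderiv (Var.u 1) F) ∘ₗ D.toLinearMap
    - LinearMap.mulLeft 𝕜 (pderiv (Var.ubar 0) F) ∘ₗ Dbar.toLinearMap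
    - LinearMap.mulLeft 𝕜 (pderiv (Var.u 0) F)

def dbarTwist (F : RR 𝕜) (Dbar : Derivation 𝕜 (RR 𝕜) (RR 𝕜)) (g : RR 𝕜) : RR 𝕜 :=
  Dbar g - pderiv (Var.u 1) F * g

theorem linOp_apply (g : RR 𝕜) :
    linOp F D Dbar g = D (Dbar g) - pderiv (Var.u 1) F * D g - pderiv (Var.ubar 0) F * Dbar g
      - pderiv (Var.u 0) F * g :=
  rfl

theorem isSymmetry_iff_linOp_eq_zero (g : RR 𝕜) : IsSymmetry F D Dbar g ↔ linOp F D Dbar g = 0 :=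
  Iff.rfl

theorem linOp_eq_sub_H1R (g : RR 𝕜) :
    linOp F D Dbar g = D (dbarTwist F Dbar g) - pderiv (Var.ubar 0) F * dbarTwist F Dbar g
      - H1R F D * g := by
  rw [linOp_apply, dbarTwist, H1R, map_sub, Derivation.leibniz, smul_eq_mul, smul_eq_mul]
  ring

theorem linOp_mul_of_dbar_eq_zero (g : RR 𝕜) {w : RR 𝕜} (hw : Dbar w = 0) :
    linOp F D Dbar (g * w) = linOp F D Dbar g * w + dbarTwist F Dbar g * D w := by
  simp only [linOp_apply, dbarTwist, Derivation.leibniz, hw, smul_eq_mul, mul_zero, map_zero,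
    map_add]
  ring

theorem linOp_opApply (ξ : ℕ → RR 𝕜) (k : ℕ) {W : RR 𝕜} (hW : ∀ i, Dbar ((⇑D)^[i] W) = 0) :
    linOp F D Dbar (opApply D ξ k W) =
      opApply D (fun j => (if j ≤ k then linOp F D Dbar (ξ j) else 0) +
        (if j = 0 then 0 else dbarTwist F Dbar (ξ (j - 1)))) (k + 1) W := by
  rw [opApply, map_sum]
  simp only [linOp_mul_of_dbar_eq_zero _ (hW _), ← Function.iterate_succ_apply' (⇑D)]
  exact sum_range_mul_add_mul_succ _ _ _ k

theorem IsDriver.coeff_relations [CharZero 𝕜] (hDD : IsTotalDerPair F D Dbar) {k : ℕ}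
    {ξ : ℕ → RR 𝕜} (hξ : IsDriver F D Dbar k ξ) :
    dbarTwist F Dbar (ξ k) = 0 ∧ ∀ i ≤ k,
      linOp F D Dbar (ξ i) + (if i = 0 then 0 else dbarTwist F Dbar (ξ (i - 1))) = 0 := by
  have hpow (m : ℕ) : Dbar (X Var.x ^ m) = 0 := by
    rw [Derivation.leibniz_pow, hDD.hDbarx, smul_zero, smul_zero]
  have hc := D.eq_zero_of_opApply_pow_eq_zero hDD.hDx fun m => by
    rw [← linOp_opApply ξ k (apply_iterate_eq_zero D hDD.comm (hpow m))]
    exact (isSymmetry_iff_linOp_eq_zero _).mp (hξ.2 _ (hpow m))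
  refine ⟨by simpa using hc (k + 1) le_rfl, fun i hi => ?_⟩
  simpa [hi] using hc i (by omega)

end TotalDerivatives

theorem Derivation.eq_zero_of_forall_algebraMap_eq_zero {R A L : Type*} [CommRing R] [CommRing A]
    [Field L] [Algebra R L] [Algebra A L] [IsFractionRing A L] (δ : Derivation R L L)
    (h : ∀ p : A, δ (algebraMap A L p) = 0) (z : L) : δ z = 0 := by
  obtain ⟨p, q, hq, rfl⟩ := IsFractionRing.div_surjective (A := A) z
  have hq0 : algebraMap A L q ≠ 0 :=
    (IsLocalization.map_units L (⟨q, hq⟩ : nonZeroDivisors A)).ne_zero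
  have := congrArg δ (div_mul_cancel₀ (algebraMap A L p) hq0)
  rw [Derivation.leibniz, h q, h p, smul_zero, zero_add, smul_eq_mul] at this
  exact (mul_eq_zero.mp this).resolve_left hq0

section FractionField

variable {𝕜 : Type*} [Field 𝕜] {D Dbar : Derivation 𝕜 (RR 𝕜) (RR 𝕜)}
  {DF DbarF : Derivation 𝕜 (FF 𝕜) (FF 𝕜)}

local notation "φ" => algebraMap (RR 𝕜) (FF 𝕜)

theorem ExtendsTo.iterate (hDF : ExtendsTo D DF) (i : ℕ) (p : RR 𝕜) :
    (⇑DF)^[i] (φ p) = φ ((⇑D)^[i] p) :=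
  (Function.Semiconj.iterate_right (fun q => (hDF q).symm) i p).symm

theorem ExtendsTo.comm {F : RR 𝕜} (hDD : IsTotalDerPair F D Dbar) (hDF : ExtendsTo D DF)
    (hDbarF : ExtendsTo Dbar DbarF) (z : FF 𝕜) : DF (DbarF z) = DbarF (DF z) := by
  rw [← sub_eq_zero, ← Derivation.commutator_apply]
  refine Derivation.eq_zero_of_forall_algebraMap_eq_zero (A := RR 𝕜) _ (fun p => ?_) z
  rw [Derivation.commutator_apply, hDbarF, hDF, hDF, hDbarF, hDD.comm, sub_self]

theorem lapAux_eq_of_factor {Df : FF 𝕜 → FF 𝕜} {c : FF 𝕜} {H : ℕ → FF 𝕜} {n : ℕ}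
    (hH : ∀ i, 1 ≤ i → i ≤ n → H i ≠ 0) (M : ℕ → FF 𝕜 → FF 𝕜)
    (hM : ∀ j < n, ∀ w, Df (M (j + 1) w) - c * M (j + 1) w = H (j + 1) * M j w) :
    ∀ j ≤ n, lapAux Df c H j (M j) = M 0
  | 0, _ => rfl
  | j + 1, hj => by
    have hstep : (fun w => (Df (M (j + 1) w) - c * M (j + 1) w) / H (j + 1)) = M j :=
      funext fun w => by rw [hM j hj w, mul_div_cancel_left₀ _ (hH (j + 1) (by omega) hj)]
    funext a
    rw [lapAux, hstep, lapAux_eq_of_factor hH M hM j (by omega)]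

theorem ExtendsTo.map_opApply (hDF : ExtendsTo D DF) (ξ : ℕ → RR 𝕜) (k : ℕ) (a : RR 𝕜) :
    φ (opApply D ξ k a) = opApply DF (fun i => φ (ξ i)) k (φ a) := by
  simp only [opApply, map_sum, map_mul, hDF.iterate]

variable {F : RR 𝕜} {k : ℕ} {ξ : ℕ → RR 𝕜}

theorem IsDriver.dbar_leadingCoeff [CharZero 𝕜] (hDD : IsTotalDerPair F D Dbar)
    (hξ : IsDriver F D Dbar k ξ) : Dbar (ξ k) = pderiv (Var.u 1) F * ξ k :=
  sub_eq_zero.mp (hξ.coeff_relations hDD).1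

theorem IsDriver.cascadeLevel_zero [CharZero 𝕜] (hDD : IsTotalDerPair F D Dbar)
    (hDF : ExtendsTo D DF) (hDbarF : ExtendsTo Dbar DbarF) {H : ℕ → FF 𝕜}
    (hH1 : H 1 = φ (H1R F D)) (hξ : IsDriver F D Dbar k ξ) :
    CascadeLevel DF DbarF (φ (pderiv (Var.u 1) F)) (φ (pderiv (Var.ubar 0) F)) H
      (fun i => φ (ξ i)) 0 k := by
  obtain ⟨htop, hrel⟩ := hξ.coeff_relations hDD
  have hz1 (i : ℕ) : cascadeCoeff DbarF (φ (pderiv (Var.u 1) F)) H (fun i => φ (ξ i)) 1 i =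
      φ (dbarTwist F Dbar (ξ i)) := by
    rw [cascadeCoeff_succ, dbarTwist, map_sub, map_mul, ← hDbarF]
    rfl
  refine ⟨by rw [hz1, htop, map_zero], fun i hi => ?_⟩
  have key : D (dbarTwist F Dbar (ξ i)) - pderiv (Var.ubar 0) F * dbarTwist F Dbar (ξ i) =
      H1R F D * ξ i - (if i = 0 then 0 else dbarTwist F Dbar (ξ (i - 1))) := by
    linear_combination hrel i hi - linOp_eq_sub_H1R (ξ i)
  have hφ := congrArg φ key
  rw [hz1, hH1, hDF]
  split_ifs at hφ ⊢ <;> simpa [hz1] using hφ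

theorem IsDriver.laplace_factorization [CharZero 𝕜] (hDD : IsTotalDerPair F D Dbar)
    (hDF : ExtendsTo D DF) (hDbarF : ExtendsTo Dbar DbarF) {H : ℕ → FF 𝕜}
    (hH : H = Hseq ⇑DF ⇑DbarF (φ (H0R F Dbar)) (φ (H1R F D)))
    (hξ : IsDriver F D Dbar k ξ) (hHnz : ∀ i : ℕ, 1 ≤ i → i ≤ k → H i ≠ 0) :
    H (k + 1) = 0 ∧ ∀ a : RR 𝕜,
      φ (opApply ⇑D ξ k a) = lapM ⇑DF (φ (pderiv (Var.ubar 0) F)) H (φ (ξ k)) (k + 1) (φ a) := by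
  set z := cascadeCoeff DbarF (φ (pderiv (Var.u 1) F)) H (fun i => φ (ξ i))
  have hrel := laplaceTwist_rel (D := DF) (Dbar := DbarF) (a₀ := φ (pderiv (Var.u 1) F))
    (b := φ (pderiv (Var.ubar 0) F)) (H := H)
    (by rw [hDbarF, hDF, hH, Hseq, Hseq, ← map_sub, ← map_sub, H1R, H0R]; ring_nf)
    (fun n => by rw [hH]; rfl)
  have hlev := cascadeLevel_of_le (hDF.comm hDD hDbarF) hrel hHnz
    (hξ.cascadeLevel_zero hDD hDF hDbarF (by rw [hH]; rfl))
  have hzk : z k 0 = (∏ i ∈ Icc 1 k, H i) * φ (ξ k) := by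
    simpa using cascadeCoeff_top hlev k le_rfl
  refine ⟨?_, fun a => ?_⟩
  · have hk := hlev k le_rfl
    rw [Nat.sub_self] at hk
    have h0 : H (k + 1) * z k 0 = 0 := hk.mul_coeff_eq_zero
    rw [hzk] at h0
    refine (mul_eq_zero.mp h0).resolve_right (mul_ne_zero ?_ ?_)
    · exact prod_ne_zero_iff.mpr fun i hi => hHnz i (mem_Icc.mp hi).1 (mem_Icc.mp hi).2
    · exact (map_ne_zero_iff φ (IsFractionRing.injective (RR 𝕜) (FF 𝕜))).mpr hξ.1
  · have hM (j : ℕ) (hj : j < k) (w : FF 𝕜) :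
        DF (opApply DF (z (j + 1)) (k - (j + 1)) w) - φ (pderiv (Var.ubar 0) F) *
          opApply DF (z (j + 1)) (k - (j + 1)) w = H (j + 1) * opApply DF (z j) (k - j) w := by
      have h := hlev j hj.le
      rw [show k - j = k - (j + 1) + 1 by omega] at h ⊢
      exact h.sub_mul_opApply w
    have hlast : (fun w => (∏ i ∈ Icc 1 k, H i) * φ (ξ k) * w) = opApply DF (z k) (k - k) := by
      funext w
      simp [opApply, hzk]
    rw [hDF.map_opApply, lapM, Nat.add_sub_cancel, hlast,
      lapAux_eq_of_factor hHnz (fun j => opApply DF (z j) (k - j)) hM k le_rfl, Nat.sub_zero]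
    rfl

end FractionField

theorem statement6_general
    (F : RR K)
    (D Dbar : Derivation K (RR K) (RR K)) (hDD : IsTotalDerPair F D Dbar)
    (DF DbarF : Derivation K (FF K) (FF K))
    (hDF : ExtendsTo D DF) (hDbarF : ExtendsTo Dbar DbarF)
    (H : ℕ → FF K)
    (hH : H = Hseq ⇑DF ⇑DbarF (algebraMap (RR K) (FF K) (H0R F Dbar))
      (algebraMap (RR K) (FF K) (H1R F D)))
    (k : ℕ) (hex : ∃ ξ : ℕ → RR K, IsDriver F D Dbar k ξ)
    (hHnz : ∀ i : ℕ, 1 ≤ i → i ≤ k → H i ≠ 0) :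
    H (k + 1) = 0 ∧
    (∃ ψ : RR K, ψ ≠ 0 ∧ Dbar ψ = pderiv (Var.u 1) F * ψ) ∧
    (∀ ξ : ℕ → RR K, IsDriver F D Dbar k ξ →
      ∃ ψ : RR K, ψ ≠ 0 ∧ Dbar ψ = pderiv (Var.u 1) F * ψ ∧
        ∀ a : RR K,
          algebraMap (RR K) (FF K) (opApply ⇑D ξ k a) =
            lapM ⇑DF (algebraMap (RR K) (FF K) (pderiv (Var.ubar 0) F)) H
              (algebraMap (RR K) (FF K) ψ) (k + 1) (algebraMap (RR K) (FF K) a)) := by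
  obtain ⟨ξ₀, hξ₀⟩ := hex
  refine ⟨(hξ₀.laplace_factorization hDD hDF hDbarF hH hHnz).1,
    ⟨ξ₀ k, hξ₀.1, hξ₀.dbar_leadingCoeff hDD⟩, fun ξ hξ => ?_⟩
  exact ⟨ξ k, hξ.1, hξ.dbar_leadingCoeff hDD, (hξ.laplace_factorization hDD hDF hDbarF hH hHnz).2⟩

/-- if the equation admits an x-symmetry driver, k is the smallest
driver order and H₁,…,H_k ≠ 0, then (i) H_{k+1} = 0, (ii) there is a nonzero ψ with
D̄(ψ) = F_{u₁}·ψ, and (iii) every driver of order k is given by the Laplace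
factorization formula with r = k + 1 for some such ψ. -/
theorem statement6
    (F : RR K) (hF : F ∈ MvPolynomial.supported K Fvars)
    (D Dbar : Derivation K (RR K) (RR K)) (hDD : IsTotalDerPair F D Dbar)
    (DF DbarF : Derivation K (FF K) (FF K))
    (hDF : ExtendsTo D DF) (hDbarF : ExtendsTo Dbar DbarF)
    (H : ℕ → FF K)
    (hH : H = Hseq ⇑DF ⇑DbarF (algebraMap (RR K) (FF K) (H0R F Dbar))
      (algebraMap (RR K) (FF K) (H1R F D)))
    (k : ℕ) (hex : ∃ ξ : ℕ → RR K, IsDriver F D Dbar k ξ)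
    (hmin : ∀ k' < k, ∀ ξ' : ℕ → RR K, ¬ IsDriver F D Dbar k' ξ')
    (hHnz : ∀ i : ℕ, 1 ≤ i → i ≤ k → H i ≠ 0) :
    H (k + 1) = 0 ∧
    (∃ ψ : RR K, ψ ≠ 0 ∧ Dbar ψ = pderiv (Var.u 1) F * ψ) ∧
    (∀ ξ : ℕ → RR K, IsDriver F D Dbar k ξ →
      ∃ ψ : RR K, ψ ≠ 0 ∧ Dbar ψ = pderiv (Var.u 1) F * ψ ∧
        ∀ a : RR K,
          algebraMap (RR K) (FF K) (opApply ⇑D ξ k a) =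
            lapM ⇑DF (algebraMap (RR K) (FF K) (pderiv (Var.ubar 0) F)) H
              (algebraMap (RR K) (FF K) ψ) (k + 1) (algebraMap (RR K) (FF K) a)) :=
  statement6_general F D Dbar hDD DF DbarF hDF hDbarF H hH k hex hHnz
end
end

section
/- Let W ∈ R be an x-integral of the equation u_{xy} = F of order p ≥ 1 (W involves u_p but no u_j with j > p). Then the partial derivative ∂W/∂u_p satisfies D̄(∂W/∂u_p) + (∂F/∂u_1)·(∂W/∂u_p) = 0; equivalently, ψ = 1/(∂W/∂u_p) ∈ Frac(R) is a nonzero element satisfying D̄(ψ) = (∂F/∂u_1)·ψ. -/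
open MvPolynomial

noncomputable section

variable {K : Type*} [Field K] [CharZero K]

/-! On polynomials in `x, y, u₀, …, u_p, ū₁, ū₂, …` the commutator `[∂/∂u_p, D̄]` acts as
`F_{u₁} · ∂/∂u_p`. It suffices to check this on the variables: `D̄ u_p = D^{p-1} F`, and
`∂/∂u_p (D^{p-1} F) = F_{u₁}` because `[∂/∂u_{i+2}, D] = ∂/∂u_{i+1}` (the `D ū_j = D̄^{j-1} F`
involve no `u_i` with `i ≥ 2`), while `D̄` of any other variable involves no `u_p`.
Since `D̄ W = 0` and `W` involves no `u_j` with `j > p`, applying the commutator to `W` gives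
`-D̄(∂W/∂u_p) = F_{u₁} · ∂W/∂u_p`; the statement about `ψ` follows from `D̄(a⁻¹) = -a⁻² D̄ a`. -/

section

omit [CharZero K]

theorem Derivation.map_mem_of_mem_adjoin {R A : Type*} [CommSemiring R] [CommSemiring A]
    [Algebra R A] (E : Derivation R A A) {s : Set A} {T : Subalgebra R A} (hsT : s ⊆ T)
    (hEs : ∀ a ∈ s, E a ∈ T) {a : A} (ha : a ∈ Algebra.adjoin R s) : E a ∈ T := by
  induction ha using Algebra.adjoin_induction with
  | mem a ha => exact hEs a ha
  | algebraMap r => simp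
  | add x y _ _ hx hy => simpa using add_mem hx hy
  | mul x y hx' hy' hx hy =>
    rw [Derivation.leibniz, smul_eq_mul, smul_eq_mul]
    exact add_mem (mul_mem (Algebra.adjoin_le hsT hx') hy) (mul_mem (Algebra.adjoin_le hsT hy') hx)

theorem Derivation.map_inv_of_map_eq_neg_mul {R L : Type*} [CommRing R] [Field L] [Algebra R L]
    (δ : Derivation R L L) {a c : L} (ha : a ≠ 0) (h : δ a = -(c * a)) :
    δ a⁻¹ = c * a⁻¹ := by
  rw [δ.leibniz_inv, h, smul_eq_mul]
  field_simp

namespace MvPolynomial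

theorem derivation_mem_supported_s12 {R σ : Type*} [CommSemiring R]
    (E : Derivation R (MvPolynomial σ R) (MvPolynomial σ R)) {s t : Set σ} (hst : s ⊆ t)
    (hE : ∀ v ∈ s, E (X v) ∈ supported R t) {f : MvPolynomial σ R} (hf : f ∈ supported R s) :
    E f ∈ supported R t :=
  E.map_mem_of_mem_adjoin (by rintro _ ⟨v, hv, rfl⟩; exact Algebra.subset_adjoin ⟨v, hst hv, rfl⟩)
    (by rintro _ ⟨v, hv, rfl⟩; exact hE v hv) hf

theorem pderiv_eq_zero_of_mem_supported_s12 {R σ : Type*} [CommSemiring R] {s : Set σ} {i : σ}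
    (hi : i ∉ s) {f : MvPolynomial σ R} (hf : f ∈ supported R s) : pderiv i f = 0 :=
  pderiv_eq_zero_of_notMem_vars fun h => hi (mem_supported.mp hf h)

theorem pderiv_ne_zero_of_mem_vars {R σ : Type*} [CommRing R] [IsDomain R] [CharZero R]
    {f : MvPolynomial σ R} {i : σ} (h : i ∈ f.vars) : pderiv i f ≠ 0 := by
  obtain ⟨m, hm, hi⟩ := (mem_vars_iff_mem_support i).mp h
  have hmi : 1 ≤ m i := Nat.one_le_iff_ne_zero.mpr (Finsupp.mem_support_iff.mp hi)
  intro h0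
  have hcoeff := coeff_pderiv (i := i) f (m - Finsupp.single i 1)
  rw [h0, coeff_zero, tsub_add_cancel_of_le (Finsupp.single_le_iff.mpr hmi)] at hcoeff
  have hcast : (((m - Finsupp.single i 1 : σ →₀ ℕ) i : ℕ) : R) + 1 = m i := by
    rw [Finsupp.tsub_apply, Finsupp.single_eq_same]
    exact_mod_cast Nat.sub_add_cancel hmi
  rw [hcast] at hcoeff
  exact mul_ne_zero (mem_support_iff.mp hm) (Nat.cast_ne_zero.mpr (by omega)) hcoeff.symm

end MvPolynomial

def varsUpTo (m : ℕ) : Set Var := {v | ∀ j, v = Var.u j → j ≤ m}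

@[simp] theorem x_mem_varsUpTo (m : ℕ) : Var.x ∈ varsUpTo m := by simp [varsUpTo]
@[simp] theorem y_mem_varsUpTo (m : ℕ) : Var.y ∈ varsUpTo m := by simp [varsUpTo]
@[simp] theorem ubar_mem_varsUpTo (m j : ℕ) : Var.ubar j ∈ varsUpTo m := by simp [varsUpTo]
@[simp] theorem u_mem_varsUpTo {m j : ℕ} : Var.u j ∈ varsUpTo m ↔ j ≤ m := by simp [varsUpTo]

theorem varsUpTo_mono : Monotone varsUpTo := fun _ _ hmn _ hv j hj => (hv j hj).trans hmn

theorem Fvars_subset_varsUpTo_one : Fvars ⊆ varsUpTo 1 := by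
  rintro v (rfl | rfl | rfl | rfl | rfl) <;> simp

namespace IsTotalDerPair

variable {F : RR K} {D Dbar : Derivation K (RR K) (RR K)}

theorem dbar_mem_supported_one (hDD : IsTotalDerPair F D Dbar) (hF : F ∈ supported K Fvars)
    {g : RR K} (hg : g ∈ supported K (varsUpTo 1)) : Dbar g ∈ supported K (varsUpTo 1) := by
  refine derivation_mem_supported_s12 Dbar subset_rfl (fun v hv => ?_) hg
  cases v with
  | x => simp [hDD.hDbarx]
  | y => simp [hDD.hDbary]
  | u j =>
    rcases j with _ | _ | j
    · simp [hDD.hDbaru0, X_mem_supported]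
    · simpa [hDD.hDbaru 0] using supported_mono Fvars_subset_varsUpTo_one hF
    · simp at hv
  | ubar j => simp [hDD.hDbarubar, X_mem_supported]

theorem iterate_dbar_mem (hDD : IsTotalDerPair F D Dbar) (hF : F ∈ supported K Fvars) (j : ℕ) :
    (⇑Dbar)^[j] F ∈ supported K (varsUpTo 1) := by
  induction j with
  | zero => exact supported_mono Fvars_subset_varsUpTo_one hF
  | succ j ih =>
    rw [Function.iterate_succ_apply']
    exact hDD.dbar_mem_supported_one hF ih

theorem d_mem_supported_succ (hDD : IsTotalDerPair F D Dbar) (hF : F ∈ supported K Fvars)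
    {m : ℕ} {g : RR K} (hg : g ∈ supported K (varsUpTo m)) :
    D g ∈ supported K (varsUpTo (m + 1)) := by
  refine derivation_mem_supported_s12 D (varsUpTo_mono m.le_succ) (fun v hv => ?_) hg
  cases v with
  | x => simp [hDD.hDx]
  | y => simp [hDD.hDy]
  | u j => simpa [hDD.hDu, X_mem_supported] using hv
  | ubar j =>
    rw [hDD.hDubar]
    exact supported_mono (varsUpTo_mono (by omega)) (hDD.iterate_dbar_mem hF j)

theorem iterate_d_mem (hDD : IsTotalDerPair F D Dbar) (hF : F ∈ supported K Fvars) (i : ℕ) :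
    (⇑D)^[i] F ∈ supported K (varsUpTo (i + 1)) := by
  induction i with
  | zero => exact supported_mono Fvars_subset_varsUpTo_one hF
  | succ i ih =>
    rw [Function.iterate_succ_apply']
    exact hDD.d_mem_supported_succ hF ih

theorem commutator_pderiv_d (hDD : IsTotalDerPair F D Dbar) (hF : F ∈ supported K Fvars)
    (i : ℕ) :
    ⁅(pderiv (Var.u (i + 2)) : Derivation K (RR K) (RR K)), D⁆ = pderiv (Var.u (i + 1)) := by
  refine derivation_ext fun v => ?_
  rw [Derivation.commutator_apply]
  cases v with
  | x => simp [hDD.hDx, pderiv_X]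
  | y => simp [hDD.hDy, pderiv_X]
  | u j => simp [hDD.hDu, pderiv_X, Pi.single_apply, apply_ite D]
  | ubar j =>
    rw [hDD.hDubar, pderiv_eq_zero_of_mem_supported_s12 (by simp) (hDD.iterate_dbar_mem hF j)]
    simp [pderiv_X]

theorem pderiv_iterate_d (hDD : IsTotalDerPair F D Dbar) (hF : F ∈ supported K Fvars) (i : ℕ) :
    pderiv (Var.u (i + 1)) ((⇑D)^[i] F) = pderiv (Var.u 1) F := by
  induction i with
  | zero => rfl
  | succ i ih =>
    have hcomm := congrArg (· ((⇑D)^[i] F)) (hDD.commutator_pderiv_d hF i)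
    simp only [Derivation.commutator_apply] at hcomm
    rw [Function.iterate_succ_apply', ← ih, ← hcomm,
      pderiv_eq_zero_of_mem_supported_s12 (i := Var.u (i + 2)) (by simp) (hDD.iterate_d_mem hF i),
      map_zero, sub_zero]

theorem commutator_pderiv_dbar (hDD : IsTotalDerPair F D Dbar) (hF : F ∈ supported K Fvars)
    {p : ℕ} (hp : 1 ≤ p) {g : RR K} (hg : g ∈ supported K (varsUpTo p)) :
    ⁅(pderiv (Var.u p) : Derivation K (RR K) (RR K)), Dbar⁆ g =
      pderiv (Var.u 1) F * pderiv (Var.u p) g := by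
  refine derivation_eqOn_supported (D₂ := pderiv (Var.u 1) F • pderiv (Var.u p))
    (fun v hv => ?_) hg
  simp only [Function.comp_apply, Derivation.commutator_apply, Derivation.smul_apply, smul_eq_mul]
  cases v with
  | x => simp [hDD.hDbarx, pderiv_X]
  | y => simp [hDD.hDbary, pderiv_X]
  | u j =>
    rcases j with _ | i
    · simp [hDD.hDbaru0, pderiv_X, (Nat.one_le_iff_ne_zero.mp hp).symm]
    · rw [hDD.hDbaru i]
      obtain rfl | hip := eq_or_lt_of_le (u_mem_varsUpTo.mp hv)
      · simp [hDD.pderiv_iterate_d hF i]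
      · rw [pderiv_eq_zero_of_mem_supported_s12 (by simpa using hip) (hDD.iterate_d_mem hF i)]
        simp [pderiv_X, hip.ne]
  | ubar j => simp [hDD.hDbarubar, pderiv_X]

end IsTotalDerPair

end

theorem mem_supported_varsUpTo_of_pderiv_eq_zero {W : RR K} {p : ℕ}
    (h : ∀ j, p < j → pderiv (Var.u j) W = 0) : W ∈ supported K (varsUpTo p) := by
  rw [mem_supported]
  rintro v hv j rfl
  by_contra hj
  exact pderiv_ne_zero_of_mem_vars hv (h j (not_le.mp hj))

/-- for an x-integral W of order p ≥ 1, the derivative ∂W/∂u_p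
satisfies D̄(∂W/∂u_p) + F_{u₁}·(∂W/∂u_p) = 0; equivalently ψ = 1/(∂W/∂u_p) is a
nonzero element of Frac(R) with D̄(ψ) = F_{u₁}·ψ. -/
theorem statement12
    (F : RR K) (hF : F ∈ MvPolynomial.supported K Fvars)
    (D Dbar : Derivation K (RR K) (RR K)) (hDD : IsTotalDerPair F D Dbar)
    (DbarF : Derivation K (FF K) (FF K)) (hDbarF : ExtendsTo Dbar DbarF)
    (W : RR K) (hWint : Dbar W = 0)
    (p : ℕ) (hp : 1 ≤ p)
    (hWp : pderiv (Var.u p) W ≠ 0) (hWhigh : ∀ j : ℕ, p < j → pderiv (Var.u j) W = 0) :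
    (Dbar (pderiv (Var.u p) W) + pderiv (Var.u 1) F * pderiv (Var.u p) W = 0) ∧
    ((algebraMap (RR K) (FF K) (pderiv (Var.u p) W))⁻¹ ≠ 0 ∧
      DbarF (algebraMap (RR K) (FF K) (pderiv (Var.u p) W))⁻¹ =
        algebraMap (RR K) (FF K) (pderiv (Var.u 1) F) *
          (algebraMap (RR K) (FF K) (pderiv (Var.u p) W))⁻¹) := by
  have hW : W ∈ supported K (varsUpTo p) := mem_supported_varsUpTo_of_pderiv_eq_zero hWhigh
  have hcomm := hDD.commutator_pderiv_dbar hF hp hW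
  rw [Derivation.commutator_apply, hWint, map_zero, zero_sub] at hcomm
  have hR : Dbar (pderiv (Var.u p) W) + pderiv (Var.u 1) F * pderiv (Var.u p) W = 0 := by
    linear_combination -hcomm
  have hFF : algebraMap (RR K) (FF K) (pderiv (Var.u p) W) ≠ 0 :=
    (map_ne_zero_iff _ (IsFractionRing.injective (RR K) (FF K))).mpr hWp
  refine ⟨hR, inv_ne_zero hFF, DbarF.map_inv_of_map_eq_neg_mul hFF ?_⟩
  rw [hDbarF, eq_neg_of_add_eq_zero_left hR, map_neg, map_mul]
end
end

section
/- Let u : ℝ × ℝ → ℝ be a smooth function satisfying the Liouville equation ∂_x∂_y u(x, y) = exp(u(x, y)) for all (x, y) ∈ ℝ². Then the function w(x, y) = ∂_x² u(x, y) − (1/2)(∂_x u(x, y))² satisfies ∂_y w(x, y) = 0 for all (x, y); that is, w is an x-integral of the Liouville equation. -/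
/-- if u is a smooth solution of the Liouville equation
∂ₓ∂_y u = exp(u), then w = ∂ₓ²u − (1/2)(∂ₓu)² satisfies ∂_y w = 0, i.e. w is an
x-integral of the Liouville equation. (Here `u x y` is the value at (x, y), with
the first argument the x-variable.) -/
theorem statement17
    (u : ℝ → ℝ → ℝ) (hu : ContDiff ℝ (⊤ : ℕ∞) (Function.uncurry u))
    (heq : ∀ x y : ℝ, deriv (fun t => deriv (fun s => u t s) y) x = Real.exp (u x y)) :
    ∀ x y : ℝ,
      deriv (fun s =>
          deriv (fun t => deriv (fun r => u r s) t) x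
            - (1 / 2) * (deriv (fun r => u r s) x) ^ 2) y = 0 := by
  set F : ℝ × ℝ → ℝ := Function.uncurry u with hF
  -- directional derivatives along coordinate lines
  have key : ∀ (φ : (ℝ × ℝ) → ℝ), ContDiff ℝ (⊤ : ℕ∞) φ → ∀ x y : ℝ,
      HasDerivAt (fun t => φ (t, y)) (fderiv ℝ φ (x, y) (1, 0)) x := by
    intro φ hφ x y
    exact (hφ.differentiable (by simp) (x, y)).hasFDerivAt.comp_hasDerivAt x
      (HasDerivAt.prodMk (hasDerivAt_id x) (hasDerivAt_const x y))
  have key2 : ∀ (φ : (ℝ × ℝ) → ℝ), ContDiff ℝ (⊤ : ℕ∞) φ → ∀ x y : ℝ,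
      HasDerivAt (fun s => φ (x, s)) (fderiv ℝ φ (x, y) (0, 1)) y := by
    intro φ hφ x y
    exact (hφ.differentiable (by simp) (x, y)).hasFDerivAt.comp_hasDerivAt y
      (HasDerivAt.prodMk (hasDerivAt_const y x) (hasDerivAt_id y))
  -- Schwarz symmetry for directional second derivatives
  have symm : ∀ (φ : (ℝ × ℝ) → ℝ), ContDiff ℝ (⊤ : ℕ∞) φ → ∀ (p : ℝ × ℝ) (v w : ℝ × ℝ),
      fderiv ℝ (fun q => fderiv ℝ φ q v) p w
        = fderiv ℝ (fun q => fderiv ℝ φ q w) p v := by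
    intro φ hφ p v w
    have hd : ContDiff ℝ (⊤ : ℕ∞) (fderiv ℝ φ) := hφ.fderiv_right (by simp)
    have hdp : DifferentiableAt ℝ (fderiv ℝ φ) p := (hd.differentiable (by simp)) p
    have happ : ∀ (a : ℝ × ℝ),
        fderiv ℝ (fun q => fderiv ℝ φ q a) p = (fderiv ℝ (fderiv ℝ φ) p).flip a := by
      intro a
      rw [fderiv_clm_apply hdp (differentiableAt_const a)]
      simp
    rw [happ v, happ w]
    simp only [ContinuousLinearMap.flip_apply]
    exact second_derivative_symmetric
      (fun q => ((hφ.differentiable (by simp)) q).hasFDerivAt) hdp.hasFDerivAt w v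
  -- the partial-derivative functions
  set g : (ℝ × ℝ) → ℝ := fun q => fderiv ℝ F q (1, 0) with hg_def
  set k : (ℝ × ℝ) → ℝ := fun q => fderiv ℝ F q (0, 1) with hk_def
  have hdF : ContDiff ℝ (⊤ : ℕ∞) (fderiv ℝ F) := hu.fderiv_right (by simp)
  have hg : ContDiff ℝ (⊤ : ℕ∞) g := hdF.clm_apply contDiff_const
  have hk : ContDiff ℝ (⊤ : ℕ∞) k := hdF.clm_apply contDiff_const
  set h : (ℝ × ℝ) → ℝ := fun q => fderiv ℝ g q (1, 0) with hh_def
  have hh : ContDiff ℝ (⊤ : ℕ∞) h := (hg.fderiv_right (by simp)).clm_apply contDiff_const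
  -- relate deriv expressions to g, h
  have e1 : ∀ x s : ℝ, deriv (fun r => u r s) x = g (x, s) := by
    intro x s
    exact (key F hu x s).deriv
  have e2 : ∀ x s : ℝ, deriv (fun t => deriv (fun r => u r s) t) x = h (x, s) := by
    intro x s
    have : (fun t => deriv (fun r => u r s) t) = fun t => g (t, s) :=
      funext fun t => e1 t s
    rw [this]
    exact (key g hg x s).deriv
  -- the hypothesis in terms of k
  have hkx : ∀ p : ℝ × ℝ, fderiv ℝ k p (1, 0) = Real.exp (F p) := by
    intro p
    have e3 : ∀ t y : ℝ, deriv (fun s => u t s) y = k (t, y) := by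
      intro t y
      exact (key2 F hu t y).deriv
    have := heq p.1 p.2
    have hfun : (fun t => deriv (fun s => u t s) p.2) = fun t => k (t, p.2) :=
      funext fun t => e3 t p.2
    rw [hfun] at this
    rw [(key k hk p.1 p.2).deriv] at this
    exact this
  -- ∂_y g = exp ∘ F
  have gy : ∀ p : ℝ × ℝ, fderiv ℝ g p (0, 1) = Real.exp (F p) := by
    intro p
    rw [hg_def]
    rw [symm F hu p (1, 0) (0, 1)]
    exact hkx p
  -- ∂_y h = exp(F) * g
  have hy : ∀ p : ℝ × ℝ, fderiv ℝ h p (0, 1) = Real.exp (F p) * g p := by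
    intro p
    rw [hh_def]
    rw [symm g hg p (1, 0) (0, 1)]
    have hfun : (fun q => fderiv ℝ g q (0, 1)) = fun q => Real.exp (F q) :=
      funext fun q => gy q
    rw [hfun]
    have hexp : HasFDerivAt (fun q => Real.exp (F q))
        (Real.exp (F p) • fderiv ℝ F p) p :=
      (Real.hasDerivAt_exp (F p)).comp_hasFDerivAt p
        ((hu.differentiable (by simp)) p).hasFDerivAt
    rw [hexp.fderiv]
    simp [hg_def]
  intro x y
  -- rewrite the integrand
  have hfun : (fun s =>
      deriv (fun t => deriv (fun r => u r s) t) x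
        - (1 / 2) * (deriv (fun r => u r s) x) ^ 2)
      = fun s => h (x, s) - (1 / 2) * (g (x, s)) ^ 2 := by
    funext s
    rw [e1 x s, e2 x s]
  rw [hfun]
  have Hh := key2 h hh x y
  have Hg := key2 g hg x y
  have Hw := Hh.fun_sub ((Hg.fun_pow 2).const_mul (1 / 2 : ℝ))
  rw [Hw.deriv]
  rw [hy (x, y), gy (x, y)]
  push_cast
  ring
end

section
/- Let u : ℝ × ℝ → ℝ be a smooth function satisfying the Liouville equation ∂_x∂_y u(x, y) = exp(u(x, y)) for all (x, y) ∈ ℝ², and let a : ℝ → ℝ be any smooth function. Then g(x, y) = a′(x) + a(x)·∂_x u(x, y) satisfies the linearized (symmetry) equation ∂_x∂_y g(x, y) = exp(u(x, y))·g(x, y) for all (x, y). (Thus the operator D + u_x maps every function of x to a symmetry of the Liouville equation.) -/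
private lemma hasDerivAt_fst {E : Type*} [NormedAddCommGroup E] [NormedSpace ℝ E]
    (F : ℝ × ℝ → E) (hF : Differentiable ℝ F) (x y : ℝ) :
    HasDerivAt (fun t => F (t, y)) (fderiv ℝ F (x, y) (1, 0)) x :=
  (hF (x, y)).hasFDerivAt.comp_hasDerivAt x (HasDerivAt.prodMk (hasDerivAt_id x) (hasDerivAt_const x y))

private lemma hasDerivAt_snd {E : Type*} [NormedAddCommGroup E] [NormedSpace ℝ E]
    (F : ℝ × ℝ → E) (hF : Differentiable ℝ F) (x y : ℝ) :
    HasDerivAt (fun s => F (x, s)) (fderiv ℝ F (x, y) (0, 1)) y :=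
  (hF (x, y)).hasFDerivAt.comp_hasDerivAt y (HasDerivAt.prodMk (hasDerivAt_const y x) (hasDerivAt_id y))

/-- if u is a smooth solution of the Liouville equation
∂ₓ∂_y u = exp(u) and a is any smooth function of x, then g = a′ + a·∂ₓu satisfies
the linearized equation ∂ₓ∂_y g = exp(u)·g; thus the operator D + uₓ maps every
function of x to a symmetry of the Liouville equation. -/
theorem statement18
    (u : ℝ → ℝ → ℝ) (hu : ContDiff ℝ (⊤ : ℕ∞) (Function.uncurry u))
    (a : ℝ → ℝ) (ha : ContDiff ℝ (⊤ : ℕ∞) a)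
    (heq : ∀ x y : ℝ, deriv (fun t => deriv (fun s => u t s) y) x = Real.exp (u x y))
    (g : ℝ → ℝ → ℝ)
    (hg : ∀ x y : ℝ, g x y = deriv a x + a x * deriv (fun r => u r y) x) :
    ∀ x y : ℝ,
      deriv (fun t => deriv (fun s => g t s) y) x = Real.exp (u x y) * g x y := by
  intro x y
  set U : ℝ × ℝ → ℝ := Function.uncurry u with hU
  have hUd : Differentiable ℝ U := hu.differentiable (by simp)
  set f' : ℝ × ℝ → (ℝ × ℝ) →L[ℝ] ℝ := fderiv ℝ U with hf'
  have hf'c : ContDiff ℝ (⊤ : ℕ∞) f' := hu.fderiv_right (by simp)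
  have hf'd : Differentiable ℝ f' := hf'c.differentiable (by simp)
  -- partial derivatives as fderiv applications
  have hderiv_x : ∀ t s : ℝ, deriv (fun r => u r s) t = f' (t, s) (1, 0) := fun t s =>
    (hasDerivAt_fst U hUd t s).deriv
  have hderiv_y : ∀ t s : ℝ, deriv (fun r => u t r) s = f' (t, s) (0, 1) := fun t s =>
    (hasDerivAt_snd U hUd t s).deriv
  -- the second derivative and its symmetry
  have hsymm : ∀ p : ℝ × ℝ, fderiv ℝ f' p (0, 1) (1, 0) = fderiv ℝ f' p (1, 0) (0, 1) :=
    fun p => second_derivative_symmetric (fun q => (hUd q).hasFDerivAt)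
      ((hf'd p).hasFDerivAt) _ _
  -- ∂ₓ∂_y u as second fderiv
  have hPx : ∀ t s : ℝ, fderiv ℝ f' (t, s) (1, 0) (0, 1) = Real.exp (u t s) := by
    intro t s
    have h1 : HasDerivAt (fun r => f' (r, s)) (fderiv ℝ f' (t, s) (1, 0)) t :=
      hasDerivAt_fst f' hf'd t s
    have h2 : HasDerivAt (fun r => f' (r, s) (0, 1))
        (fderiv ℝ f' (t, s) (1, 0) (0, 1)) t :=
      (ContinuousLinearMap.apply ℝ ℝ ((0 : ℝ), (1 : ℝ))).hasFDerivAt.comp_hasDerivAt t h1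
    have h3 : (fun r => deriv (fun sx => u r sx) s) = fun r => f' (r, s) (0, 1) := by
      funext r; exact hderiv_y r s
    have := heq t s
    rw [h3] at this
    rw [← this, h2.deriv]
  -- inner derivative of g
  have hinner : ∀ t : ℝ, deriv (fun s => g t s) y = a t * Real.exp (u t y) := by
    intro t
    have h1 : HasDerivAt (fun s => f' (t, s)) (fderiv ℝ f' (t, y) (0, 1)) y :=
      hasDerivAt_snd f' hf'd t y
    have h2 : HasDerivAt (fun s => f' (t, s) (1, 0))
        (fderiv ℝ f' (t, y) (0, 1) (1, 0)) y :=
      (ContinuousLinearMap.apply ℝ ℝ ((1 : ℝ), (0 : ℝ))).hasFDerivAt.comp_hasDerivAt y h1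
    have h3 : HasDerivAt (fun s => g t s)
        (a t * (fderiv ℝ f' (t, y) (0, 1) (1, 0))) y := by
      have : (fun s => g t s) = fun s => deriv a t + a t * f' (t, s) (1, 0) := by
        funext s; rw [hg t s, hderiv_x t s]
      rw [this]
      exact (h2.const_mul (a t)).const_add (deriv a t)
    rw [h3.deriv, hsymm (t, y), hPx t y]
  have hfun : (fun t => deriv (fun s => g t s) y) = fun t => a t * Real.exp (u t y) := by
    funext t; exact hinner t
  rw [hfun]
  -- outer derivative
  have hux : HasDerivAt (fun t => u t y) (f' (x, y) (1, 0)) x := hasDerivAt_fst U hUd x y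
  have hexp : HasDerivAt (fun t => Real.exp (u t y))
      (Real.exp (u x y) * f' (x, y) (1, 0)) x := hux.exp
  have haA : HasDerivAt a (deriv a x) x := (ha.differentiable (by simp) x).hasDerivAt
  have hmul : HasDerivAt (fun t => a t * Real.exp (u t y))
      (deriv a x * Real.exp (u x y) + a x * (Real.exp (u x y) * f' (x, y) (1, 0))) x :=
    haA.mul hexp
  rw [hmul.deriv, hg x y, hderiv_x x y]
  ring
end
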